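/- arXiv:math/9911158 — 5 statements merged into one kernel-verified Lean document; each statement's English description precedes it below -/
import Mathlib

section
/- If there is a weak map M ⇝ M' of oriented matroids on element set E, and e ∈ E is a nonzero element of M' (i.e., some covector of M' is nonzero at e), then there is a weak map M/e ⇝ M'/e of the contractions. -/
/-- Sign vectors on a ground set `E`: functions to `{-,0,+}`. -/
abbrev SignVec (E : Type*) := E → SignType

/-- Composition of sign vectors: `(X ∘ Y)(e) = X(e)` if `X(e) ≠ 0`, else `Y(e)`. -/
def SignVec.comp {E : Type*} (X Y : SignVec E) : SignVec E :=
  fun e => if X e ≠ 0 then X e else Y e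

/-- The componentwise partial order on sign vectors, where on signs the only strict
inequalities are `+ > 0` and `- > 0`.  `SignVec.le X Y` means `X ≤ Y`. -/
def SignVec.le {E : Type*} (X Y : SignVec E) : Prop :=
  ∀ e, X e = 0 ∨ X e = Y e

/-- The covector axioms for an oriented matroid: contains the zero sign vector, closed
under negation, closed under composition, and satisfies elimination. -/
def IsCovectorSet {E : Type*} (V : Set (SignVec E)) : Prop :=
  (0 : SignVec E) ∈ V ∧
  (∀ X ∈ V, -X ∈ V) ∧
  (∀ X ∈ V, ∀ Y ∈ V, X.comp Y ∈ V) ∧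
  (∀ X ∈ V, ∀ Y ∈ V, ∀ e, X e = 1 → Y e = -1 →
    ∃ Z ∈ V, Z e = 0 ∧ ∀ f, ¬(X f = -(Y f) ∧ X f ≠ 0) → Z f = X.comp Y f)

/-- An oriented matroid on a ground set `E`, given by its set of covectors. -/
structure OrientedMatroid (E : Type*) where
  covectors : Set (SignVec E)
  isCovectorSet : IsCovectorSet covectors

/-- A finite set `I` is independent for the covector set `V` if for each `e ∈ I` there
is a covector nonzero at `e` and vanishing on `I \ {e}`. -/
def SetIndep {E : Type*} (V : Set (SignVec E)) (I : Finset E) : Prop :=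
  ∀ e ∈ I, ∃ X ∈ V, X e ≠ 0 ∧ ∀ f ∈ I, f ≠ e → X f = 0

/-- The rank of a covector set: the maximal cardinality of an independent set. -/
noncomputable def setRank {E : Type*} (V : Set (SignVec E)) : ℕ :=
  sSup {n | ∃ I : Finset E, SetIndep V I ∧ I.card = n}

/-- `weakSets V₁ V₂`: every sign vector of `V₂` is dominated by one of `V₁`
(a weak map from `V₁` to `V₂`). -/
def weakSets {E : Type*} (V₁ V₂ : Set (SignVec E)) : Prop :=
  ∀ X ∈ V₂, ∃ Y ∈ V₁, SignVec.le X Y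

/-- A weak map `M₁ ⇝ M₂` of oriented matroids, i.e. `M₁ ≥ M₂`. -/
def WeakMap {E : Type*} (M₁ M₂ : OrientedMatroid E) : Prop :=
  weakSets M₁.covectors M₂.covectors

/-- The contraction `M/e`: covectors are the restrictions to the complement of `e` of the
covectors of `M` vanishing at `e`. -/
def contractCov {E : Type*} (V : Set (SignVec E)) (e : E) :
    Set (SignVec {f : E // f ≠ e}) :=
  {X' | ∃ X ∈ V, X e = 0 ∧ ∀ f : {f : E // f ≠ e}, X' f = X f.1}

lemma signType_neq_zero (a : SignType) (h : a ≠ 0) : a = 1 ∨ a = -1 := by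
  revert a; decide

lemma signType_neg_eq_zero (a : SignType) (h : -a = 0) : a = 0 := by
  revert a; decide

lemma signType_eq_neg_self (a : SignType) (h : a = -a) : a = 0 := by
  revert a; decide

/-- If there is a weak map from `M` to `M'` and `e` is a nonzero element of `M'`, then
there is a weak map from `M/e` to `M'/e` of the contractions. -/
theorem weakMap_contraction {E : Type*} (M M' : OrientedMatroid E) (e : E)
    (h : WeakMap M M') (he : ∃ X ∈ M'.covectors, X e ≠ 0) :
    weakSets (contractCov M.covectors e) (contractCov M'.covectors e) := by
  obtain ⟨hz, hneg, hcomp, helim⟩ := M.isCovectorSet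
  rintro X' ⟨Y', hY', hY'e, hX'⟩
  obtain ⟨Y, hY, hYle⟩ := h Y' hY'
  by_cases hYe : Y e = 0
  · refine ⟨fun f => Y f.1, ⟨Y, hY, hYe, fun f => rfl⟩, fun f => ?_⟩
    rcases hYle f.1 with h1 | h1
    · left; rw [hX' f, h1]
    · right; rw [hX' f, h1]
  -- Y e ≠ 0
  obtain ⟨X0, hX0, hX0e⟩ := he
  have hX1 : ∃ X1 ∈ M'.covectors, X1 e = -Y e := by
    rcases signType_neq_zero (X0 e) hX0e with h0 | h0 <;>
      rcases signType_neq_zero (Y e) hYe with h1 | h1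
    · exact ⟨-X0, M'.isCovectorSet.2.1 X0 hX0, by simp [h0, h1]⟩
    · exact ⟨X0, hX0, by simp [h0, h1]⟩
    · exact ⟨X0, hX0, by simp [h0, h1]⟩
    · exact ⟨-X0, M'.isCovectorSet.2.1 X0 hX0, by simp [h0, h1]⟩
  obtain ⟨X1, hX1m, hX1e⟩ := hX1
  have hW'm : SignVec.comp Y' X1 ∈ M'.covectors :=
    M'.isCovectorSet.2.2.1 Y' hY' X1 hX1m
  obtain ⟨Z, hZ, hZle⟩ := h _ hW'm
  have hW'e : SignVec.comp Y' X1 e = -Y e := by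
    simp [SignVec.comp, hY'e, hX1e]
  have hZe : Z e = -Y e := by
    rcases hZle e with h1 | h1
    · rw [hW'e] at h1; exact absurd (signType_neg_eq_zero _ h1) hYe
    · rw [← h1, hW'e]
  have hZf : ∀ f, Y' f ≠ 0 → Z f = Y' f := by
    intro f hf
    have hW'f : SignVec.comp Y' X1 f = Y' f := by simp [SignVec.comp, hf]
    rcases hZle f with h1 | h1
    · rw [hW'f] at h1; exact absurd h1 hf
    · rw [← h1, hW'f]
  have hYf : ∀ f, Y' f ≠ 0 → Y f = Y' f := by
    intro f hf
    rcases hYle f with h1 | h1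
    · exact absurd h1 hf
    · exact h1.symm
  rcases signType_neq_zero (Y e) hYe with hsy | hsy
  · -- Y e = 1, Z e = -1, eliminate Y then Z
    obtain ⟨T, hT, hTe, hTf⟩ := helim Y hY Z hZ e hsy (by rw [hZe, hsy])
    refine ⟨fun f => T f.1, ⟨T, hT, hTe, fun f => rfl⟩, fun f => ?_⟩
    by_cases hx : X' f = 0
    · exact Or.inl hx
    right
    have hY'f : Y' f.1 ≠ 0 := by rw [hX' f] at hx; exact hx
    have hsep : ¬(Y f.1 = -(Z f.1) ∧ Y f.1 ≠ 0) := by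
      rintro ⟨h1, h2⟩
      rw [hYf f.1 hY'f, hZf f.1 hY'f] at h1
      exact hY'f (signType_eq_neg_self _ h1)
    have h2 : SignVec.comp Y Z f.1 = Y' f.1 := by
      simp [SignVec.comp, hYf f.1 hY'f, hY'f]
    show X' f = T f.1
    rw [hX' f, hTf f.1 hsep, h2]
  · -- Y e = -1, Z e = 1, eliminate Z then Y
    obtain ⟨T, hT, hTe, hTf⟩ := helim Z hZ Y hY e (by rw [hZe, hsy]; rfl) hsy
    refine ⟨fun f => T f.1, ⟨T, hT, hTe, fun f => rfl⟩, fun f => ?_⟩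
    by_cases hx : X' f = 0
    · exact Or.inl hx
    right
    have hY'f : Y' f.1 ≠ 0 := by rw [hX' f] at hx; exact hx
    have hsep : ¬(Z f.1 = -(Y f.1) ∧ Z f.1 ≠ 0) := by
      rintro ⟨h1, h2⟩
      rw [hYf f.1 hY'f, hZf f.1 hY'f] at h1
      exact hY'f (signType_eq_neg_self _ h1)
    have h2 : SignVec.comp Z Y f.1 = Y' f.1 := by
      simp [SignVec.comp, hZf f.1 hY'f, hY'f]
    show X' f = T f.1
    rw [hX' f, hTf f.1 hsep, h2]
end

section
/- If there is a weak map M ⇝ M' between oriented matroids on E of equal rank, and X is a nonzero covector of M, then there is a nonzero covector X' of M' with X ≥ X'. -/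
/-! ### Auxiliary lemmas -/

section Aux

variable {E : Type*}

private lemma st_negneg : ∀ s : SignType, -(-s) = s := by decide
private lemma st_neg_eq_zero : ∀ s : SignType, -s = 0 ↔ s = 0 := by decide
private lemma st_eq : ∀ s t : SignType, s ≠ 0 → t ≠ 0 → s ≠ -t → s = t := by decide
private lemma st_self : ∀ s : SignType, s ≠ 0 → s ≠ -s := by decide

private lemma sv_neg_apply (X : SignVec E) (e : E) : (-X) e = -(X e) := rfl

private lemma comp_apply_ne {X Y : SignVec E} {e : E} (h : X e ≠ 0) :
    X.comp Y e = X e := if_pos h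

private lemma comp_apply_eq {X Y : SignVec E} {e : E} (h : X e = 0) :
    X.comp Y e = Y e := if_neg (fun hn => hn h)

private lemma neg_comp (X Y : SignVec E) : (-X).comp (-Y) = -(X.comp Y) := by
  funext e
  by_cases h : X e = 0
  · rw [sv_neg_apply, comp_apply_eq h, comp_apply_eq (by rw [sv_neg_apply, st_neg_eq_zero]; exact h)]
    rfl
  · rw [sv_neg_apply, comp_apply_ne h,
      comp_apply_ne (show (-X) e ≠ 0 from fun hc => h ((st_neg_eq_zero _).mp hc))]
    rfl

private lemma sv_le_neg {X Y : SignVec E} (h : SignVec.le X Y) : SignVec.le (-X) (-Y) := by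
  intro e
  rcases h e with h1 | h1
  · left; rw [sv_neg_apply, h1]; try rfl
  · right; rw [sv_neg_apply, sv_neg_apply, h1]

private lemma sv_ne_zero {X : SignVec E} (h : X ≠ 0) : ∃ e, X e ≠ 0 := by
  by_contra hc
  push_neg at hc
  exact h (funext fun e => hc e)

/-- Symmetric form of the elimination axiom. -/
private lemma elim_sym {V : Set (SignVec E)} (hV : IsCovectorSet V) {X Y : SignVec E}
    (hX : X ∈ V) (hY : Y ∈ V) (e : E) (hop : X e = -(Y e)) (h0 : X e ≠ 0) :
    ∃ Z ∈ V, Z e = 0 ∧ ∀ f, ¬(X f = -(Y f) ∧ X f ≠ 0) → Z f = X.comp Y f := by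
  obtain ⟨hz, hneg, hcomp, helim⟩ := hV
  match hXe : X e with
  | SignType.zero => exact absurd hXe h0
  | SignType.pos =>
      have hYe : Y e = -1 := by
        have h1 : -(Y e) = SignType.pos := by rw [← hop, hXe]
        have h2 := st_negneg (Y e)
        rw [h1] at h2
        exact h2.symm
      exact helim X hX Y hY e hXe hYe
  | SignType.neg =>
      have hXe' : (-X) e = 1 := by rw [sv_neg_apply, hXe]; try rfl
      have hYe : Y e = 1 := by
        have h1 : -(Y e) = SignType.neg := by rw [← hop, hXe]
        have h2 := st_negneg (Y e)
        rw [h1] at h2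
        exact h2.symm
      have hYe' : (-Y) e = -1 := by rw [sv_neg_apply, hYe]; try rfl
      obtain ⟨Z, hZ, hZe, hZf⟩ := helim (-X) (hneg X hX) (-Y) (hneg Y hY) e hXe' hYe'
      refine ⟨-Z, hneg Z hZ, by rw [sv_neg_apply, hZe]; try rfl, fun f hf => ?_⟩
      have hf' : ¬((-X) f = -((-Y) f) ∧ (-X) f ≠ 0) := by
        rintro ⟨h1, h2⟩
        apply hf
        refine ⟨?_, ?_⟩
        · rw [sv_neg_apply, sv_neg_apply, st_negneg] at h1
          rw [← st_negneg (X f), h1]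
        · rw [sv_neg_apply, Ne, st_neg_eq_zero] at h2
          exact h2
      have hzf := hZf f hf'
      rw [neg_comp] at hzf
      show -(Z f) = X.comp Y f
      have hzf2 : Z f = -(X.comp Y f) := hzf
      rw [hzf2, st_negneg]

/-- Contraction of a covector set at a point. -/
private def ctr (V : Set (SignVec E)) (a : E) : Set (SignVec E) := {Y ∈ V | Y a = 0}

private lemma ctr_isCovectorSet {V : Set (SignVec E)} (hV : IsCovectorSet V) (a : E) :
    IsCovectorSet (ctr V a) := by
  obtain ⟨hz, hneg, hcomp, helim⟩ := hV
  refine ⟨⟨hz, rfl⟩, fun X hX => ⟨hneg X hX.1, by rw [sv_neg_apply, hX.2]; try rfl⟩,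
    fun X hX Y hY => ⟨hcomp X hX.1 Y hY.1, by rw [comp_apply_eq hX.2]; exact hY.2⟩,
    fun X hX Y hY e hXe hYe => ?_⟩
  obtain ⟨Z, hZ, hZe, hZf⟩ := helim X hX.1 Y hY.1 e hXe hYe
  have hZa : Z a = 0 := by
    have h := hZf a (by rintro ⟨_, h2⟩; exact h2 hX.2)
    rw [h, comp_apply_eq hX.2]
    exact hY.2
  exact ⟨Z, ⟨hZ, hZa⟩, hZe, hZf⟩

/-- Lifting lemma. -/
private lemma lift_lemma {V V' : Set (SignVec E)} (hV : IsCovectorSet V) (hV' : IsCovectorSet V')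
    (hw : weakSets V V') {a : E} {B' : SignVec E} (hB' : B' ∈ V') (hBa : B' a ≠ 0)
    {Y' : SignVec E} (hY' : Y' ∈ V') (hYa : Y' a = 0) :
    ∃ W ∈ V, W a = 0 ∧ SignVec.le Y' W := by
  obtain ⟨hz', hneg', hcomp', helim'⟩ := hV'
  have hP : Y'.comp B' ∈ V' := hcomp' Y' hY' B' hB'
  have hQ : Y'.comp (-B') ∈ V' := hcomp' Y' hY' (-B') (hneg' B' hB')
  have hPa : (Y'.comp B') a = B' a := comp_apply_eq hYa
  have hQa : (Y'.comp (-B')) a = -(B' a) := comp_apply_eq hYa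
  obtain ⟨W₁, hW₁, hle₁⟩ := hw _ hP
  obtain ⟨W₂, hW₂, hle₂⟩ := hw _ hQ
  have hW₁a : W₁ a = B' a := by
    rcases hle₁ a with h | h
    · rw [hPa] at h; exact absurd h hBa
    · rw [← h, hPa]
  have hW₂a : W₂ a = -(B' a) := by
    rcases hle₂ a with h | h
    · rw [hQa, st_neg_eq_zero] at h; exact absurd h hBa
    · rw [← h, hQa]
  obtain ⟨Z, hZ, hZa, hZf⟩ := elim_sym hV hW₁ hW₂ a
    (by rw [hW₁a, hW₂a, st_negneg]) (by rw [hW₁a]; exact hBa)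
  refine ⟨Z, hZ, hZa, fun f => ?_⟩
  by_cases hYf : Y' f = 0
  · left; exact hYf
  · right
    have hPf : (Y'.comp B') f = Y' f := comp_apply_ne hYf
    have hQf : (Y'.comp (-B')) f = Y' f := comp_apply_ne hYf
    have hW₁f : W₁ f = Y' f := by
      rcases hle₁ f with h | h
      · rw [hPf] at h; exact absurd h hYf
      · rw [← h, hPf]
    have hW₂f : W₂ f = Y' f := by
      rcases hle₂ f with h | h
      · rw [hQf] at h; exact absurd h hYf
      · rw [← h, hQf]
    have hns : ¬(W₁ f = -(W₂ f) ∧ W₁ f ≠ 0) := by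
      rintro ⟨h1, _⟩
      rw [hW₁f, hW₂f] at h1
      exact st_self _ hYf h1
    rw [hZf f hns, comp_apply_ne (by rw [hW₁f]; exact hYf), hW₁f]

private lemma weak_ctr {V V' : Set (SignVec E)} (hV : IsCovectorSet V) (hV' : IsCovectorSet V')
    (hw : weakSets V V') {a : E} {B' : SignVec E} (hB' : B' ∈ V') (hBa : B' a ≠ 0) :
    weakSets (ctr V a) (ctr V' a) := by
  rintro Y' ⟨hY', hYa⟩
  obtain ⟨W, hW, hWa, hle⟩ := lift_lemma hV hV' hw hB' hBa hY' hYa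
  exact ⟨W, ⟨hW, hWa⟩, hle⟩

end Aux

section Rank

variable {E : Type*} [Fintype E]

private lemma rank_bddAbove (V : Set (SignVec E)) :
    BddAbove {n | ∃ I : Finset E, SetIndep V I ∧ I.card = n} := by
  refine ⟨Fintype.card E, ?_⟩
  rintro n ⟨I, _, rfl⟩
  exact (Finset.card_le_univ I).trans_eq Finset.card_univ

private lemma card_le_setRank {V : Set (SignVec E)} {I : Finset E} (hI : SetIndep V I) :
    I.card ≤ setRank V :=
  le_csSup (rank_bddAbove V) ⟨I, hI, rfl⟩

private lemma exists_max_indep (V : Set (SignVec E)) :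
    ∃ I : Finset E, SetIndep V I ∧ I.card = setRank V := by
  have h0 : 0 ∈ {n | ∃ I : Finset E, SetIndep V I ∧ I.card = n} :=
    ⟨∅, fun e he => absurd he (Finset.notMem_empty e), Finset.card_empty⟩
  exact Nat.sSup_mem ⟨0, h0⟩ (rank_bddAbove V)

/-- Cleaning lemma. -/
private lemma clean_lemma {V : Set (SignVec E)} (hV : IsCovectorSet V) (J : Finset E) (a : E)
    (hB : ∀ j ∈ J, ∃ B ∈ V, B j ≠ 0 ∧ B a = 0 ∧ ∀ j' ∈ J, j' ≠ j → B j' = 0) :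
    ∀ (k : ℕ) (N : Finset E) (C : SignVec E), C ∈ V → C a ≠ 0 →
      (∀ j ∈ J, C j ≠ 0 → j ∈ N) → N.card ≤ k →
      ∃ D ∈ V, D a ≠ 0 ∧ ∀ j ∈ J, D j = 0 := by
  classical
  intro k
  induction k with
  | zero =>
      intro N C hC hCa hN hcard
      refine ⟨C, hC, hCa, fun j hj => ?_⟩
      by_contra hne
      have hmem := hN j hj hne
      rw [Finset.card_eq_zero.mp (Nat.le_zero.mp hcard)] at hmem
      exact absurd hmem (Finset.notMem_empty j)
  | succ k ih =>
      intro N C hC hCa hN hcard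
      by_cases hex : ∃ j ∈ J, C j ≠ 0
      · obtain ⟨j, hjJ, hCj⟩ := hex
        obtain ⟨B, hBV, hBj, hBa, hBj'⟩ := hB j hjJ
        obtain ⟨D, hDV, hDj, hDa, hDj'⟩ :
            ∃ D ∈ V, D j = -(C j) ∧ D a = 0 ∧ ∀ j' ∈ J, j' ≠ j → D j' = 0 := by
          by_cases h : B j = -(C j)
          · exact ⟨B, hBV, h, hBa, hBj'⟩
          · have hBC : B j = C j := st_eq _ _ hBj hCj h
            exact ⟨-B, hV.2.1 B hBV, by rw [sv_neg_apply, hBC], by rw [sv_neg_apply, hBa]; try rfl,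
              fun j' hj' hne => by rw [sv_neg_apply, hBj' j' hj' hne]; try rfl⟩
        obtain ⟨Z, hZ, hZj, hZf⟩ := elim_sym hV hC hDV j
          (by rw [hDj, st_negneg]) hCj
        -- a-coordinate survives
        have hZa : Z a = C a := by
          have h := hZf a (by
            rintro ⟨h1, h2⟩
            rw [hDa] at h1
            exact hCa (by rw [h1]; try rfl))
          rw [h, comp_apply_ne hCa]
        -- coordinates of J: cleaned or unchanged
        have hZJ : ∀ j' ∈ J, Z j' = 0 ∨ (Z j' = C j' ∧ j' ≠ j) := by
          intro j' hj'
          by_cases hjj : j' = j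
          · left; rw [hjj]; exact hZj
          · have hDj'0 : D j' = 0 := hDj' j' hj' hjj
            have h := hZf j' (by
              rintro ⟨h1, h2⟩
              rw [hDj'0] at h1
              exact h2 (by rw [h1]; try rfl))
            by_cases hCj' : C j' = 0
            · left; rw [h, comp_apply_eq hCj']; exact hDj'0
            · right; exact ⟨by rw [h, comp_apply_ne hCj'], hjj⟩
        -- new bookkeeping set
        have hjN : j ∈ N := hN j hjJ hCj
        refine ih (N.erase j) Z hZ (by rw [hZa]; exact hCa) ?_ ?_
        · intro j' hj' hZj'
          rcases hZJ j' hj' with h | ⟨h, hne⟩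
          · exact absurd h hZj'
          · exact Finset.mem_erase.mpr ⟨hne, hN j' hj' (by rw [← h]; exact hZj')⟩
        · have := Finset.card_erase_of_mem hjN
          omega
      · push_neg at hex
        exact ⟨C, hC, hCa, hex⟩

/-- Rank of a contraction at a non-loop. -/
private lemma rank_ctr {V : Set (SignVec E)} (hV : IsCovectorSet V) {a : E} {G : SignVec E}
    (hG : G ∈ V) (hGa : G a ≠ 0) :
    setRank (ctr V a) + 1 = setRank V := by
  classical
  have hle : setRank (ctr V a) + 1 ≤ setRank V := by
    obtain ⟨J, hJ, hJcard⟩ := exists_max_indep (ctr V a)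
    have haJ : a ∉ J := by
      intro haJ
      obtain ⟨B, hB, hBa, _⟩ := hJ a haJ
      exact hBa hB.2
    have hBwit : ∀ j ∈ J, ∃ B ∈ V, B j ≠ 0 ∧ B a = 0 ∧ ∀ j' ∈ J, j' ≠ j → B j' = 0 := by
      intro j hj
      obtain ⟨B, hB, hBj, hBf⟩ := hJ j hj
      exact ⟨B, hB.1, hBj, hB.2, fun j' hj' hne => hBf j' hj' hne⟩
    obtain ⟨D, hDV, hDa, hDJ⟩ := clean_lemma hV J a hBwit J.card J G hG hGa
      (fun j hj _ => hj) le_rfl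
    have hind : SetIndep V (insert a J) := by
      intro e he
      rcases Finset.mem_insert.mp he with rfl | heJ
      · exact ⟨D, hDV, hDa, fun f hf hne =>
          hDJ f (by rcases Finset.mem_insert.mp hf with h | h; exact absurd h hne; exact h)⟩
      · obtain ⟨B, hB, hBe, hBf⟩ := hJ e heJ
        refine ⟨B, hB.1, hBe, fun f hf hne => ?_⟩
        rcases Finset.mem_insert.mp hf with rfl | hfJ
        · exact hB.2
        · exact hBf f hfJ hne
    have := card_le_setRank hind
    rw [Finset.card_insert_of_notMem haJ, hJcard] at this
    exact this
  have hge : setRank V ≤ setRank (ctr V a) + 1 := by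
    obtain ⟨I, hI, hIcard⟩ := exists_max_indep V
    rw [← hIcard]
    by_cases haI : a ∈ I
    · have hind : SetIndep (ctr V a) (I.erase a) := by
        intro e he
        obtain ⟨hea, heI⟩ := Finset.mem_erase.mp he
        obtain ⟨B, hB, hBe, hBf⟩ := hI e heI
        exact ⟨B, ⟨hB, hBf a haI (Ne.symm hea)⟩, hBe,
          fun f hf hne => hBf f (Finset.mem_of_mem_erase hf) hne⟩
      have := card_le_setRank hind
      rw [Finset.card_erase_of_mem haI] at this
      omega
    · -- choose witnesses
      have hWit : ∀ i ∈ I, ∃ B ∈ V, B i ≠ 0 ∧ ∀ f ∈ I, f ≠ i → B f = 0 := hI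
      by_cases hex : ∃ i₀ ∈ I, ∃ B ∈ V, B i₀ ≠ 0 ∧ (∀ f ∈ I, f ≠ i₀ → B f = 0) ∧ B a ≠ 0
      · obtain ⟨i₀, hi₀, B₀, hB₀V, hB₀i, hB₀f, hB₀a⟩ := hex
        have hind : SetIndep (ctr V a) (I.erase i₀) := by
          intro e he
          obtain ⟨hei, heI⟩ := Finset.mem_erase.mp he
          obtain ⟨B, hBV, hBe, hBf⟩ := hI e heI
          by_cases hBa : B a = 0
          · exact ⟨B, ⟨hBV, hBa⟩, hBe,
              fun f hf hne => hBf f (Finset.mem_of_mem_erase hf) hne⟩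
          · obtain ⟨D, hDV, hDa, hDi₀⟩ :
                ∃ D ∈ V, D a = -(B a) ∧ ∀ f ∈ I, f ≠ i₀ → D f = 0 := by
              by_cases h : B₀ a = -(B a)
              · exact ⟨B₀, hB₀V, h, hB₀f⟩
              · have : B₀ a = B a := st_eq _ _ hB₀a hBa h
                exact ⟨-B₀, hV.2.1 B₀ hB₀V, by rw [sv_neg_apply, this],
                  fun f hf hne => by rw [sv_neg_apply, hB₀f f hf hne]; try rfl⟩
            obtain ⟨Z, hZ, hZa, hZf⟩ := elim_sym hV hBV hDV a
              (by rw [hDa, st_negneg]) hBa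
            have hZe : Z e = B e := by
              have h := hZf e (by
                rintro ⟨h1, h2⟩
                rw [hDi₀ e heI hei] at h1
                exact h2 (by rw [h1]; try rfl))
              rw [h, comp_apply_ne hBe]
            refine ⟨Z, ⟨hZ, hZa⟩, by rw [hZe]; exact hBe, fun f hf hne => ?_⟩
            obtain ⟨hfi, hfI⟩ := Finset.mem_erase.mp hf
            have hBf0 : B f = 0 := hBf f hfI hne
            have hDf0 : D f = 0 := hDi₀ f hfI hfi
            have h := hZf f (by
              rintro ⟨h1, h2⟩
              exact h2 hBf0)
            rw [h, comp_apply_eq hBf0]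
            exact hDf0
        have := card_le_setRank hind
        rw [Finset.card_erase_of_mem hi₀] at this
        omega
      · push_neg at hex
        -- every witness vanishes at a; so I is independent in the contraction
        have hind : SetIndep (ctr V a) I := by
          intro e he
          obtain ⟨B, hBV, hBe, hBf⟩ := hI e he
          by_cases hBa : B a = 0
          · exact ⟨B, ⟨hBV, hBa⟩, hBe, hBf⟩
          · exact absurd (hex e he B hBV hBe hBf) hBa
        have := card_le_setRank hind
        omega
  omega

/-- The chain lemma: repeatedly eliminate coordinates where `U` is opposite to `X`. -/
private lemma chain_lemma {V : Set (SignVec E)} (hV : IsCovectorSet V) {X : SignVec E}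
    (hX : X ∈ V) (P : E → Prop) (hPX : ∀ f, P f → X f ≠ 0) {g : E} (hg : P g) :
    ∀ (k : ℕ) (N : Finset E) (U : SignVec E), U ∈ V → U g = X g →
      (∃ f, P f ∧ U f = -(X f)) →
      (∀ f, P f → U f = -(X f) → f ∈ N) → N.card ≤ k →
      ∃ Us ∈ V, ∃ gs, P gs ∧ Us gs = 0 ∧ Us g = X g ∧ ∀ f, P f → Us f ≠ -(X f) := by
  classical
  intro k
  induction k with
  | zero =>
      intro N U hU hUg hex hN hcard
      obtain ⟨f, hPf, hUf⟩ := hex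
      have := hN f hPf hUf
      rw [Finset.card_eq_zero.mp (Nat.le_zero.mp hcard)] at this
      exact absurd this (Finset.notMem_empty f)
  | succ k ih =>
      intro N U hU hUg hex hN hcard
      obtain ⟨f₁, hPf₁, hUf₁⟩ := hex
      have hXf₁ : X f₁ ≠ 0 := hPX f₁ hPf₁
      obtain ⟨R, hR, hRf₁, hRf⟩ := elim_sym hV hX hU f₁
        (by rw [hUf₁, st_negneg]) hXf₁
      -- g-coordinate survives
      have hRg : R g = X g := by
        have hXg : X g ≠ 0 := hPX g hg
        have h := hRf g (by
          rintro ⟨h1, _⟩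
          rw [hUg] at h1
          exact st_self _ hXg h1)
        rw [h, comp_apply_ne hXg]
      -- coordinates with P: either not opposite, or were already opposite in U
      have hRP : ∀ f, P f → R f = -(X f) → (U f = -(X f) ∧ f ≠ f₁) := by
        intro f hPf hRfop
        have hXf : X f ≠ 0 := hPX f hPf
        constructor
        · by_contra hUnot
          have h := hRf f (by
            rintro ⟨h1, _⟩
            apply hUnot
            rw [← st_negneg (U f), ← h1])
          rw [h, comp_apply_ne hXf] at hRfop
          exact st_self _ hXf hRfop
        · intro hff₁
          rw [hff₁, hRf₁] at hRfop
          exact hXf₁ (by rw [← st_negneg (X f₁), ← hRfop]; try rfl)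
      by_cases hrem : ∃ f, P f ∧ R f = -(X f)
      · have hf₁N : f₁ ∈ N := hN f₁ hPf₁ hUf₁
        refine ih (N.erase f₁) R hR hRg hrem ?_ ?_
        · intro f hPf hRfop
          obtain ⟨hUf, hne⟩ := hRP f hPf hRfop
          exact Finset.mem_erase.mpr ⟨hne, hN f hPf hUf⟩
        · have := Finset.card_erase_of_mem hf₁N
          omega
      · push_neg at hrem
        exact ⟨R, hR, f₁, hPf₁, hRf₁, hRg, hrem⟩

/-- Main induction. -/
private lemma main_aux :
    ∀ (n : ℕ) (V V' : Set (SignVec E)), IsCovectorSet V → IsCovectorSet V' →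
      weakSets V V' → setRank V = n → setRank V' = n →
      ∀ X ∈ V, X ≠ 0 → ∃ X' ∈ V', X' ≠ 0 ∧ SignVec.le X' X := by
  classical
  intro n
  induction n using Nat.strong_induction_on with
  | _ n IH =>
    intro V V' hV hV' hw hrV hrV' X hX hX0
    -- rank is at least 1
    obtain ⟨e₀, he₀⟩ := sv_ne_zero hX0
    have hn1 : 1 ≤ n := by
      have hind : SetIndep V {e₀} := by
        intro e he
        rw [Finset.mem_singleton] at he
        subst he
        exact ⟨X, hX, he₀, fun f hf hne => absurd (Finset.mem_singleton.mp hf) hne⟩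
      have := card_le_setRank hind
      rw [Finset.card_singleton, hrV] at this
      exact this
    by_cases hcase : ∃ a, X a = 0 ∧ ∃ B' ∈ V', B' a ≠ 0
    · -- Case 1 : contract at a
      obtain ⟨a, hXa, B', hB', hBa⟩ := hcase
      obtain ⟨W, hW, hleBW⟩ := hw B' hB'
      have hWa : W a ≠ 0 := by
        rcases hleBW a with h | h
        · exact absurd h hBa
        · rw [← h]; exact hBa
      have hr1 : setRank (ctr V a) = n - 1 := by
        have := rank_ctr hV hW hWa
        omega
      have hr2 : setRank (ctr V' a) = n - 1 := by
        have := rank_ctr hV' hB' hBa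
        omega
      obtain ⟨X', hX', hX'0, hX'le⟩ := IH (n - 1) (by omega) (ctr V a) (ctr V' a)
        (ctr_isCovectorSet hV a) (ctr_isCovectorSet hV' a)
        (weak_ctr hV hV' hw hB' hBa) hr1 hr2 X ⟨hX, hXa⟩ hX0
      exact ⟨X', hX'.1, hX'0, hX'le⟩
    · -- Case 2 : every zero of X is a loop of V'
      push_neg at hcase
      have hc2 : ∀ a, X a = 0 → ∀ B' ∈ V', B' a = 0 := by
        intro a ha B' hB'
        by_contra h
        exact h (hcase a ha B' hB')
      set P : E → Prop := fun f => ∃ B' ∈ V', B' f ≠ 0 with hPdef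
      have hPX : ∀ f, P f → X f ≠ 0 := by
        rintro f ⟨B', hB', hBf⟩ h0
        exact hBf (hc2 f h0 B' hB')
      -- get a nonzero covector of V'
      obtain ⟨I', hI', hI'card⟩ := exists_max_indep V'
      have hI'pos : 0 < I'.card := by rw [hI'card, hrV']; omega
      obtain ⟨g, hgI⟩ := Finset.card_pos.mp hI'pos
      obtain ⟨C', hC', hCg, _⟩ := hI' g hgI
      have hg : P g := ⟨C', hC', hCg⟩
      have hXg : X g ≠ 0 := hPX g hg
      obtain ⟨W₀, hW₀, hleCW₀⟩ := hw C' hC'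
      have hW₀g : W₀ g = C' g := by
        rcases hleCW₀ g with h | h
        · exact absurd h hCg
        · exact h.symm
      -- normalize so that C g = X g
      obtain ⟨C, hCV', WC, hWCV, hleCW, hCgX⟩ :
          ∃ C ∈ V', ∃ Wc ∈ V, SignVec.le C Wc ∧ C g = X g := by
        by_cases h : C' g = -(X g)
        · refine ⟨-C', hV'.2.1 C' hC', -W₀, hV.2.1 W₀ hW₀, sv_le_neg hleCW₀, ?_⟩
          rw [sv_neg_apply, h, st_negneg]
        · exact ⟨C', hC', W₀, hW₀, hleCW₀, st_eq _ _ hCg hXg h⟩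
      have hWCg : WC g = X g := by
        rcases hleCW g with h | h
        · rw [h] at hCgX; exact absurd hCgX.symm hXg
        · rw [← h, hCgX]
      by_cases hbeta : ∀ f, C f = 0 ∨ C f = X f
      · -- C itself works
        refine ⟨C, hCV', fun h => hXg ?_, hbeta⟩
        rw [← hCgX, h]; try rfl
      · -- chain
        push_neg at hbeta
        obtain ⟨f₁, hCf₁0, hCf₁X⟩ := hbeta
        have hPf₁ : P f₁ := ⟨C, hCV', hCf₁0⟩
        have hXf₁ : X f₁ ≠ 0 := hPX f₁ hPf₁
        have hCf₁ : C f₁ = -(X f₁) := by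
          by_contra h
          exact hCf₁X (st_eq _ _ hCf₁0 hXf₁ h)
        have hWCf₁ : WC f₁ = -(X f₁) := by
          rcases hleCW f₁ with h | h
          · exact absurd h hCf₁0
          · rw [← h, hCf₁]
        obtain ⟨Us, hUs, gs, hPgs, hUsgs, hUsg, hUsne⟩ :=
          chain_lemma hV hX P hPX hg Finset.univ.card Finset.univ WC hWCV hWCg
            ⟨f₁, hPf₁, hWCf₁⟩ (fun f _ _ => Finset.mem_univ f) le_rfl
        -- contract at gs
        have hXgs : X gs ≠ 0 := hPX gs hPgs
        obtain ⟨B'', hB'', hB''gs⟩ := hPgs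
        have hr1 : setRank (ctr V gs) = n - 1 := by
          have := rank_ctr hV hX hXgs
          omega
        have hr2 : setRank (ctr V' gs) = n - 1 := by
          have := rank_ctr hV' hB'' hB''gs
          omega
        have hUs0 : Us ≠ 0 := by
          intro h
          apply hXg
          rw [← hUsg, h]; try rfl
        obtain ⟨Y', hY', hY'0, hY'le⟩ := IH (n - 1) (by omega) (ctr V gs) (ctr V' gs)
          (ctr_isCovectorSet hV gs) (ctr_isCovectorSet hV' gs)
          (weak_ctr hV hV' hw hB'' hB''gs) hr1 hr2 Us ⟨hUs, hUsgs⟩ hUs0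
        refine ⟨Y', hY'.1, hY'0, fun f => ?_⟩
        by_cases hYf : Y' f = 0
        · left; exact hYf
        · right
          have hPf : P f := ⟨Y', hY'.1, hYf⟩
          have hXf : X f ≠ 0 := hPX f hPf
          have hYUs : Y' f = Us f := by
            rcases hY'le f with h | h
            · exact absurd h hYf
            · exact h
          have hUsf : Us f ≠ -(X f) := hUsne f hPf
          rw [hYUs]
          exact st_eq _ _ (by rw [← hYUs]; exact hYf) hXf hUsf

end Rank

/-- If there is a weak map from `M` to `M'` between equal-rank oriented matroids and `X`
is a nonzero covector of `M`, then there is a nonzero covector `X'` of `M'` with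
`X ≥ X'`. -/
theorem weakMap_nonzero_covector_dominates {E : Type*} [Fintype E]
    (M M' : OrientedMatroid E) (h : WeakMap M M')
    (hrank : setRank M.covectors = setRank M'.covectors)
    (X : SignVec E) (hX : X ∈ M.covectors) (hX0 : X ≠ 0) :
    ∃ X' ∈ M'.covectors, X' ≠ 0 ∧ SignVec.le X' X :=
  main_aux (setRank M'.covectors) M.covectors M'.covectors
    M.isCovectorSet M'.isCovectorSet h hrank rfl X hX hX0
end

section
/- Let M ⇝ M' be a weak map of equal-rank oriented matroids on E. Define Φ : 𝒱*(M) → 𝒱*(M') by sending X to the composition of all nonzero covectors of M' that are ≤ X (and 0 to 0). Then Φ is a well-defined order-preserving map satisfying X ≥ Φ(X) for all X, and Φ maps nonzero covectors to nonzero covectors. -/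
namespace OMProof

attribute [local instance] Classical.propDecidable

open Finset

variable {E : Type*}

-- SignType facts
lemma st_ne_zero_cases : ∀ a : SignType, a ≠ 0 → a = 1 ∨ a = -1 := by decide

lemma st_eq_of_ne_neg : ∀ a b : SignType, a ≠ 0 → b ≠ 0 → a ≠ -b → a = b := by decide

lemma st_neg_ne_self : ∀ a : SignType, a ≠ 0 → a ≠ -a := by decide

lemma st_resolve : ∀ a b : SignType, b ≠ 0 → a ≠ -b → a = 0 ∨ a = b := by decide

lemma st_eq_neg_of_ne : ∀ a b : SignType, a ≠ 0 → b ≠ 0 → a ≠ b → -a = b := by decide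

lemma st_zero_eq_neg : ∀ a : SignType, 0 = -a → a = 0 := by decide

lemma st_neg_eq_zero : ∀ a : SignType, -a = 0 ↔ a = 0 := by decide

lemma st_conflict_neg : ∀ a b : SignType, ¬(a = -b ∧ a ≠ 0) → ¬(-a = - -b ∧ ¬-a = 0) := by decide

-- SignVec basics
lemma comp_apply_pos {X Y : SignVec E} {e : E} (h : X e ≠ 0) : X.comp Y e = X e := by
  simp [SignVec.comp, h]

lemma comp_apply_zero {X Y : SignVec E} {e : E} (h : X e = 0) : X.comp Y e = Y e := by
  simp [SignVec.comp, h]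

lemma sv_neg_apply (X : SignVec E) (e : E) : (-X) e = -(X e) := rfl

lemma sv_zero_apply (e : E) : (0 : SignVec E) e = 0 := rfl

lemma neg_comp (X Y : SignVec E) : (-X).comp (-Y) = -(X.comp Y) := by
  funext e
  by_cases h : X e = 0
  · rw [sv_neg_apply, comp_apply_zero h, comp_apply_zero (by rw [sv_neg_apply, h]; rfl)]
    rfl
  · rw [sv_neg_apply, comp_apply_pos h,
      comp_apply_pos (by rw [sv_neg_apply, ne_eq, st_neg_eq_zero]; exact h)]
    rfl

lemma le_refl (X : SignVec E) : SignVec.le X X := fun _ => Or.inr rfl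

lemma le_zero_left (X : SignVec E) : SignVec.le 0 X := fun _ => Or.inl rfl

lemma le_trans {X Y Z : SignVec E} (h1 : SignVec.le X Y) (h2 : SignVec.le Y Z) :
    SignVec.le X Z := by
  intro e
  rcases h1 e with h | h
  · exact Or.inl h
  · by_cases hx : X e = 0
    · exact Or.inl hx
    · rcases h2 e with h' | h'
      · exact absurd (h.trans h') hx
      · exact Or.inr (h.trans h')

lemma le_apply {X Y : SignVec E} (h : SignVec.le X Y) {e : E} (he : X e ≠ 0) : X e = Y e :=
  (h e).resolve_left he

-- covector set basics
variable {V : Set (SignVec E)}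

lemma cvZero (hV : IsCovectorSet V) : (0 : SignVec E) ∈ V := hV.1
lemma cvNeg (hV : IsCovectorSet V) {X : SignVec E} (h : X ∈ V) : -X ∈ V :=
  hV.2.1 X h
lemma cvComp (hV : IsCovectorSet V) {X Y : SignVec E} (hX : X ∈ V) (hY : Y ∈ V) :
    X.comp Y ∈ V := hV.2.2.1 X hX Y hY

/-- Derived general elimination. -/
lemma elimGen (hV : IsCovectorSet V) {X Y : SignVec E} (hX : X ∈ V) (hY : Y ∈ V) (e : E)
    (hXe : X e ≠ 0) (hYe : Y e = -(X e)) :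
    ∃ Z ∈ V, Z e = 0 ∧ ∀ f, ¬(X f = -(Y f) ∧ X f ≠ 0) → Z f = X.comp Y f := by
  rcases st_ne_zero_cases _ hXe with h1 | h1
  · exact hV.2.2.2 X hX Y hY e h1 (by rw [hYe, h1])
  · obtain ⟨Z, hZV, hZe, hZ⟩ := hV.2.2.2 (-X) (cvNeg hV hX) (-Y) (cvNeg hV hY) e
      (by rw [sv_neg_apply, h1]; rfl) (by rw [sv_neg_apply, hYe, h1]; rfl)
    refine ⟨-Z, cvNeg hV hZV, by rw [sv_neg_apply, hZe]; rfl, ?_⟩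
    intro f hf
    have hf' : ¬((-X) f = -((-Y) f) ∧ (-X) f ≠ 0) := by
      simpa only [Pi.neg_apply, ne_eq] using st_conflict_neg (X f) (Y f) hf
    have hval := hZ f hf'
    rw [neg_comp] at hval
    rw [sv_neg_apply, hval, sv_neg_apply, neg_neg]

/-- Elimination preserving coordinates where the partner vanishes. -/
lemma elimA (hV : IsCovectorSet V) {W U : SignVec E} (hW : W ∈ V) (hU : U ∈ V) (f : E)
    (hWf : W f ≠ 0) (hUf : U f ≠ 0) :
    ∃ Z ∈ V, Z f = 0 ∧ ∀ g, U g = 0 → Z g = W g := by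
  have hU0 : ∃ U' ∈ V, U' f = -(W f) ∧ ∀ g, U g = 0 → U' g = 0 := by
    by_cases h : U f = -(W f)
    · exact ⟨U, hU, h, fun g hg => hg⟩
    · refine ⟨-U, cvNeg hV hU, ?_, fun g hg => by rw [sv_neg_apply, hg]; rfl⟩
      rw [sv_neg_apply, st_eq_of_ne_neg _ _ hUf hWf h]
  obtain ⟨U', hU'V, hU'f, hU'0⟩ := hU0
  obtain ⟨Z, hZV, hZf, hZ⟩ := elimGen hV hW hU'V f hWf (by rw [hU'f])
  refine ⟨Z, hZV, hZf, ?_⟩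
  intro g hg
  have hU'g : U' g = 0 := hU'0 g hg
  have hnc : ¬(W g = -(U' g) ∧ W g ≠ 0) := by
    rw [hU'g]
    rintro ⟨h1, h2⟩
    exact h2 (by simpa using h1)
  rw [hZ g hnc]
  by_cases h : W g = 0
  · rw [comp_apply_zero h, hU'g, h]
  · rw [comp_apply_pos h]

-- Independence basics
lemma setIndep_subset {I J : Finset E} (hI : SetIndep V I) (hJI : J ⊆ I) : SetIndep V J := by
  intro e he
  obtain ⟨X, hXV, hXe, hX0⟩ := hI e (hJI he)
  exact ⟨X, hXV, hXe, fun f hf hfe => hX0 f (hJI hf) hfe⟩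

lemma setIndep_empty : SetIndep V (∅ : Finset E) := fun e he => absurd he (Finset.notMem_empty e)

lemma setIndep_singleton {Z : SignVec E} (hZ : Z ∈ V) {e : E} (hZe : Z e ≠ 0) :
    SetIndep V {e} := by
  intro f hf
  rw [Finset.mem_singleton] at hf
  subst hf
  exact ⟨Z, hZ, hZe, fun g hg hge => absurd (Finset.mem_singleton.mp hg) hge⟩

/-- Closure operator associated to a covector set. -/
def cl (V : Set (SignVec E)) (A : Finset E) : Set E :=
  {e | ∀ Z ∈ V, (∀ a ∈ A, Z a = 0) → Z e = 0}

lemma mem_cl_of_mem {A : Finset E} {a : E} (ha : a ∈ A) : a ∈ cl V A :=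
  fun _ _ hZ => hZ a ha

lemma cl_mono {A B : Finset E} (h : A ⊆ B) : cl V A ⊆ cl V B := by
  intro e he Z hZ hZB
  exact he Z hZ (fun a ha => hZB a (h ha))

lemma cl_subset_cl {A B : Finset E} (h : ∀ a ∈ A, a ∈ cl V B) : cl V A ⊆ cl V B := by
  intro e he Z hZ hZB
  exact he Z hZ (fun a ha => h a ha Z hZ hZB)

lemma notMem_cl_self {I : Finset E} (hI : SetIndep V I) {x : E} (hx : x ∈ I) :
    x ∉ cl V (I.erase x) := by
  obtain ⟨D, hDV, hDx, hD0⟩ := hI x hx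
  intro hc
  exact hDx (hc D hDV (fun a ha => hD0 a (Finset.mem_of_mem_erase ha)
    (Finset.ne_of_mem_erase ha)))

/-- Extension lemma: adding an element outside the closure keeps independence. -/
lemma setIndep_insert (hV : IsCovectorSet V) {I : Finset E} (hI : SetIndep V I)
    {Z : SignVec E} (hZV : Z ∈ V) (hZI : ∀ g ∈ I, Z g = 0) {e : E} (hZe : Z e ≠ 0) :
    SetIndep V (insert e I) := by
  by_cases heI : e ∈ I
  · rwa [Finset.insert_eq_self.mpr heI]
  intro f hf
  rcases Finset.mem_insert.mp hf with rfl | hfI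
  · exact ⟨Z, hZV, hZe, fun g hg hge => hZI g (Finset.mem_of_mem_insert_of_ne hg hge)⟩
  · obtain ⟨D, hDV, hDf, hD0⟩ := hI f hfI
    by_cases hDe : D e = 0
    · refine ⟨D, hDV, hDf, fun g hg hgf => ?_⟩
      rcases Finset.mem_insert.mp hg with rfl | hgI
      · exact hDe
      · exact hD0 g hgI hgf
    · obtain ⟨Z', hZ'V, hZ'e, hZ'⟩ := elimA hV hDV hZV e hDe hZe
      have hfe : f ≠ e := fun hc => heI (hc ▸ hfI)
      refine ⟨Z', hZ'V, ?_, fun g hg hgf => ?_⟩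
      · rw [hZ' f (hZI f hfI)]; exact hDf
      · rcases Finset.mem_insert.mp hg with rfl | hgI
        · exact hZ'e
        · rw [hZ' g (hZI g hgI)]; exact hD0 g hgI hgf

/-- Steinitz exchange: an independent set has no more elements than a spanning
independent set. -/
lemma steinitz (hV : IsCovectorSet V) {J : Finset E} (hJspan : ∀ e, e ∈ cl V J) :
    ∀ K : Finset E, SetIndep V K → K.card ≤ J.card := by
  suffices h : ∀ n (K : Finset E), (K \ J).card = n → SetIndep V K → K.card ≤ J.card by
    intro K hK
    exact h _ K rfl hK
  intro n
  induction n using Nat.strong_induction_on with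
  | _ n ih =>
    intro K hcard hK
    rcases Nat.eq_zero_or_pos n with rfl | hn
    · have : K ⊆ J := by
        intro x hx
        by_contra hxJ
        have : x ∈ K \ J := Finset.mem_sdiff.mpr ⟨hx, hxJ⟩
        rw [Finset.card_eq_zero.mp hcard] at this
        exact absurd this (Finset.notMem_empty x)
      exact Finset.card_le_card this
    · have hne : (K \ J).Nonempty := by
        rw [← Finset.card_pos, hcard]; exact hn
      obtain ⟨x, hx⟩ := hne
      have hxK : x ∈ K := (Finset.mem_sdiff.mp hx).1
      have hxJ : x ∉ J := (Finset.mem_sdiff.mp hx).2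
      have hy : ∃ y ∈ J, y ∉ cl V (K.erase x) := by
        by_contra hc
        push_neg at hc
        have hsub : cl V J ⊆ cl V (K.erase x) := cl_subset_cl hc
        exact notMem_cl_self hK hxK (hsub (hJspan x))
      obtain ⟨y, hyJ, hy⟩ := hy
      have hyK : y ∉ K.erase x := fun hc => hy (mem_cl_of_mem hc)
      obtain ⟨Z, hZV, hZI, hZy⟩ : ∃ Z ∈ V, (∀ g ∈ K.erase x, Z g = 0) ∧ Z y ≠ 0 := by
        by_contra hc
        push_neg at hc
        exact hy (fun Z hZ h0 => hc Z hZ h0)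
      have hK' : SetIndep V (insert y (K.erase x)) :=
        setIndep_insert hV (setIndep_subset hK (Finset.erase_subset x K)) hZV hZI hZy
      have hcard' : (insert y (K.erase x)).card = K.card := by
        rw [Finset.card_insert_of_notMem hyK, Finset.card_erase_of_mem hxK]
        have : 1 ≤ K.card := Finset.card_pos.mpr ⟨x, hxK⟩
        omega
      have hsd : (insert y (K.erase x)) \ J = (K \ J).erase x := by
        ext z
        simp only [Finset.mem_sdiff, Finset.mem_insert, Finset.mem_erase]
        constructor
        · rintro ⟨rfl | ⟨hzx, hzK⟩, hzJ⟩
          · exact absurd hyJ hzJ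
          · exact ⟨hzx, hzK, hzJ⟩
        · rintro ⟨hzx, hzK, hzJ⟩
          exact ⟨Or.inr ⟨hzx, hzK⟩, hzJ⟩
      have hlt : ((insert y (K.erase x)) \ J).card < n := by
        rw [hsd, Finset.card_erase_of_mem hx, hcard]
        omega
      have := ih _ hlt (insert y (K.erase x)) rfl hK'
      omega

-- rank basics
lemma rank_bddAbove [Fintype E] :
    BddAbove {n | ∃ I : Finset E, SetIndep V I ∧ I.card = n} := by
  refine ⟨Fintype.card E, ?_⟩
  rintro n ⟨I, _, rfl⟩
  exact Finset.card_le_univ I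

lemma card_le_rank [Fintype E] {I : Finset E} (hI : SetIndep V I) : I.card ≤ setRank V :=
  le_csSup rank_bddAbove ⟨I, hI, rfl⟩

lemma rank_le [Fintype E] {n : ℕ} (h : ∀ I : Finset E, SetIndep V I → I.card ≤ n) :
    setRank V ≤ n := by
  have hne : {n | ∃ I : Finset E, SetIndep V I ∧ I.card = n}.Nonempty :=
    ⟨0, ⟨∅, setIndep_empty, Finset.card_empty⟩⟩
  apply csSup_le hne
  rintro m ⟨I, hI, rfl⟩
  exact h I hI

/-- Every independent set extends to a spanning independent set of full rank. -/
lemma exists_basis [Fintype E] (hV : IsCovectorSet V) {J : Finset E} (hJ : SetIndep V J) :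
    ∃ B : Finset E, J ⊆ B ∧ SetIndep V B ∧ B.card = setRank V ∧ ∀ e, e ∈ cl V B := by
  classical
  set F := Finset.univ.powerset.filter (fun I => SetIndep V I ∧ J ⊆ I) with hF
  have hJF : J ∈ F := by
    simp only [hF, Finset.mem_filter, Finset.mem_powerset]
    exact ⟨Finset.subset_univ J, hJ, Finset.Subset.refl J⟩
  obtain ⟨B, hBF, hBmax⟩ := F.exists_max_image Finset.card ⟨J, hJF⟩
  simp only [hF, Finset.mem_filter, Finset.mem_powerset] at hBF
  obtain ⟨-, hBindep, hJB⟩ := hBF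
  have hspan : ∀ e, e ∈ cl V B := by
    intro e
    by_contra he
    obtain ⟨Z, hZV, hZ0, hZe⟩ : ∃ Z ∈ V, (∀ g ∈ B, Z g = 0) ∧ Z e ≠ 0 := by
      by_contra hc
      push_neg at hc
      exact he (fun Z hZ h0 => hc Z hZ h0)
    have heB : e ∉ B := fun hc => hZe (hZ0 e hc)
    have hBi : insert e B ∈ F := by
      simp only [hF, Finset.mem_filter, Finset.mem_powerset]
      exact ⟨Finset.subset_univ _, setIndep_insert hV hBindep hZV hZ0 hZe,
        hJB.trans (Finset.subset_insert e B)⟩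
    have := hBmax _ hBi
    rw [Finset.card_insert_of_notMem heB] at this
    omega
  refine ⟨B, hJB, hBindep, le_antisymm (card_le_rank hBindep) ?_, hspan⟩
  exact rank_le (fun K hK => steinitz hV hspan K hK)

/-- Full sign realizability on a finite set. -/
def FullIndep (V : Set (SignVec E)) (I : Finset E) : Prop :=
  ∀ s : SignVec E, (∀ e ∈ I, s e ≠ 0) → ∃ Z ∈ V, ∀ e ∈ I, Z e = s e

lemma fullIndep_of_setIndep (hV : IsCovectorSet V) {I : Finset E} (hI : SetIndep V I) :
    FullIndep V I := by
  classical
  induction I using Finset.induction_on with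
  | empty => exact fun s _ => ⟨0, cvZero hV, fun e he => absurd he (Finset.notMem_empty e)⟩
  | @insert e I heI ih =>
    intro s hs
    obtain ⟨Z', hZ'V, hZ'⟩ := ih (setIndep_subset hI (Finset.subset_insert e I)) s
      (fun f hf => hs f (Finset.mem_insert_of_mem hf))
    obtain ⟨D, hDV, hDe, hD0⟩ := hI e (Finset.mem_insert_self e I)
    have hse : s e ≠ 0 := hs e (Finset.mem_insert_self e I)
    obtain ⟨D', hD'V, hD'e, hD'0⟩ : ∃ D' ∈ V, D' e = s e ∧ ∀ f ∈ I, D' f = 0 := by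
      by_cases h : D e = s e
      · exact ⟨D, hDV, h, fun f hf => hD0 f (Finset.mem_insert_of_mem hf)
          (fun hc => heI (hc ▸ hf))⟩
      · refine ⟨-D, cvNeg hV hDV, ?_, fun f hf => by
          rw [sv_neg_apply, hD0 f (Finset.mem_insert_of_mem hf) (fun hc => heI (hc ▸ hf))]; rfl⟩
        rw [sv_neg_apply]
        exact st_eq_neg_of_ne _ _ hDe hse h
    refine ⟨D'.comp Z', cvComp hV hD'V hZ'V, fun f hf => ?_⟩
    rcases Finset.mem_insert.mp hf with rfl | hfI
    · rw [comp_apply_pos (by rw [hD'e]; exact hse), hD'e]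
    · rw [comp_apply_zero (hD'0 f hfI), hZ' f hfI]

/-- "Star" lemma: if all full-sign patterns on `J` can be realized with prescribed
values on `T`, then the zero pattern on `J` can be realized with those values. -/
lemma star (hV : IsCovectorSet V) :
    ∀ (J T : Finset E) (v : SignVec E), Disjoint J T →
      (∀ s : SignVec E, (∀ g ∈ J, s g ≠ 0) →
        ∃ P ∈ V, (∀ g ∈ J, P g = s g) ∧ (∀ t ∈ T, P t = v t)) →
      ∃ Y ∈ V, (∀ g ∈ J, Y g = 0) ∧ (∀ t ∈ T, Y t = v t) := by
  classical
  intro J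
  induction J using Finset.induction_on with
  | empty =>
    intro T v _ hyp
    obtain ⟨P, hPV, -, hPT⟩ := hyp (fun _ => 1) (fun g hg => absurd hg (Finset.notMem_empty g))
    exact ⟨P, hPV, fun g hg => absurd hg (Finset.notMem_empty g), hPT⟩
  | @insert g J hgJ ih =>
    intro T v hdisj hyp
    have hgT : g ∉ T := by
      intro hc
      exact (Finset.disjoint_left.mp hdisj (Finset.mem_insert_self g J)) hc
    have hdisj' : Disjoint J (insert g T) := by
      rw [Finset.disjoint_insert_right]
      exact ⟨hgJ, Finset.disjoint_of_subset_left (Finset.subset_insert g J) hdisj⟩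
    have hyp' : ∀ s : SignVec E, (∀ g' ∈ J, s g' ≠ 0) →
        ∃ P ∈ V, (∀ g' ∈ J, P g' = s g') ∧
          (∀ t ∈ insert g T, P t = Function.update v g 0 t) := by
      intro s hs
      obtain ⟨Pp, hPpV, hPpJ, hPpT⟩ := hyp (Function.update s g 1) (by
        intro g' hg'
        rcases Finset.mem_insert.mp hg' with rfl | hg'J
        · rw [Function.update_self]; decide
        · rw [Function.update_of_ne (fun hc => hgJ (by rw [← hc]; exact hg'J))]; exact hs g' hg'J)
      obtain ⟨Pm, hPmV, hPmJ, hPmT⟩ := hyp (Function.update s g (-1)) (by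
        intro g' hg'
        rcases Finset.mem_insert.mp hg' with rfl | hg'J
        · rw [Function.update_self]; decide
        · rw [Function.update_of_ne (fun hc => hgJ (by rw [← hc]; exact hg'J))]; exact hs g' hg'J)
      have hPpg : Pp g = 1 := by
        rw [hPpJ g (Finset.mem_insert_self g J), Function.update_self]
      have hPmg : Pm g = -1 := by
        rw [hPmJ g (Finset.mem_insert_self g J), Function.update_self]
      obtain ⟨Z, hZV, hZg, hZ⟩ := hV.2.2.2 Pp hPpV Pm hPmV g hPpg hPmg
      have hagree : ∀ f, Pp f = Pm f → f ≠ g → Z f = Pp f := by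
        intro f hPf hfg
        have hnc : ¬(Pp f = -(Pm f) ∧ Pp f ≠ 0) := by
          rw [← hPf]
          rintro ⟨h1, h2⟩
          exact st_neg_ne_self _ h2 h1
        rw [hZ f hnc]
        by_cases h : Pp f = 0
        · rw [comp_apply_zero h, ← hPf, h]
        · rw [comp_apply_pos h]
      have hsame : ∀ g' ∈ J, Pp g' = Pm g' := by
        intro g' hg'
        rw [hPpJ g' (Finset.mem_insert_of_mem hg'), hPmJ g' (Finset.mem_insert_of_mem hg'),
          Function.update_of_ne (fun hc => hgJ (by rw [← hc]; exact hg')),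
          Function.update_of_ne (fun hc => hgJ (by rw [← hc]; exact hg'))]
      refine ⟨Z, hZV, fun g' hg' => ?_, fun t ht => ?_⟩
      · rw [hagree g' (hsame g' hg') (fun hc => hgJ (by rw [← hc]; exact hg')), hPpJ g'
          (Finset.mem_insert_of_mem hg'), Function.update_of_ne (fun hc => hgJ (by rw [← hc]; exact hg'))]
      · rcases Finset.mem_insert.mp ht with rfl | htT
        · rw [Function.update_self]; exact hZg
        · have htg : t ≠ g := fun hc => hgT (hc ▸ htT)
          rw [Function.update_of_ne htg,
            hagree t (by rw [hPpT t htT, hPmT t htT]) htg, hPpT t htT]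
    obtain ⟨Y, hYV, hYJ, hYT⟩ := ih (insert g T) (Function.update v g 0) hdisj' hyp'
    refine ⟨Y, hYV, fun g' hg' => ?_, fun t ht => ?_⟩
    · rcases Finset.mem_insert.mp hg' with rfl | hg'J
      · rw [hYT g' (Finset.mem_insert_self g' T), Function.update_self]
      · exact hYJ g' hg'J
    · have htg : t ≠ g := fun hc => hgT (hc ▸ ht)
      rw [← Function.update_of_ne htg 0 v]
      exact hYT t (Finset.mem_insert_of_mem ht)

lemma setIndep_of_fullIndep (hV : IsCovectorSet V) {I : Finset E} (hI : FullIndep V I) :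
    SetIndep V I := by
  classical
  intro e he
  have hdisj : Disjoint (I.erase e) ({e} : Finset E) := by
    simp [Finset.disjoint_singleton_right]
  have hyp : ∀ s : SignVec E, (∀ g ∈ I.erase e, s g ≠ 0) →
      ∃ P ∈ V, (∀ g ∈ I.erase e, P g = s g) ∧ (∀ t ∈ ({e} : Finset E), P t = (1 : SignVec E) t) := by
    intro s hs
    obtain ⟨P, hPV, hP⟩ := hI (Function.update s e 1) (by
      intro f hf
      by_cases hfe : f = e
      · subst hfe; rw [Function.update_self]; decide
      · rw [Function.update_of_ne hfe]
        exact hs f (Finset.mem_erase.mpr ⟨hfe, hf⟩))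
    refine ⟨P, hPV, fun g hg => ?_, fun t ht => ?_⟩
    · rw [hP g (Finset.mem_of_mem_erase hg),
        Function.update_of_ne (Finset.ne_of_mem_erase hg)]
    · rw [Finset.mem_singleton] at ht
      subst ht
      rw [hP t he, Function.update_self]; rfl
  obtain ⟨Y, hYV, hYJ, hYT⟩ := star hV (I.erase e) {e} 1 hdisj hyp
  have hYe : Y e = 1 := by
    exact (hYT e (Finset.mem_singleton_self e)).trans rfl
  refine ⟨Y, hYV, by rw [hYe]; decide, fun f hf hfe => hYJ f (Finset.mem_erase.mpr ⟨hfe, hf⟩)⟩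

lemma fullIndep_transfer {V₁ V₂ : Set (SignVec E)} (hw : weakSets V₁ V₂) {I : Finset E}
    (hI : FullIndep V₂ I) : FullIndep V₁ I := by
  intro s hs
  obtain ⟨Z, hZV, hZ⟩ := hI s hs
  obtain ⟨Y, hYV, hle⟩ := hw Z hZV
  refine ⟨Y, hYV, fun e he => ?_⟩
  rw [← le_apply hle (by rw [hZ e he]; exact hs e he), hZ e he]

lemma setIndep_transfer {V₁ V₂ : Set (SignVec E)} (h₁ : IsCovectorSet V₁)
    (h₂ : IsCovectorSet V₂) (hw : weakSets V₁ V₂) {I : Finset E} (hI : SetIndep V₂ I) :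
    SetIndep V₁ I :=
  setIndep_of_fullIndep h₁ (fullIndep_transfer hw (fullIndep_of_setIndep h₂ hI))

lemma rank_transfer [Fintype E] {V₁ V₂ : Set (SignVec E)} (h₁ : IsCovectorSet V₁)
    (h₂ : IsCovectorSet V₂) (hw : weakSets V₁ V₂) : setRank V₂ ≤ setRank V₁ :=
  rank_le (fun I hI => card_le_rank (setIndep_transfer h₁ h₂ hw hI))

/-- Contraction: covectors vanishing on `J`. -/
def Vsub (V : Set (SignVec E)) (J : Finset E) : Set (SignVec E) :=
  {Z ∈ V | ∀ g ∈ J, Z g = 0}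

lemma vsub_subset {J : Finset E} : Vsub V J ⊆ V := fun _ h => h.1

lemma vsub_isCovectorSet (hV : IsCovectorSet V) (J : Finset E) : IsCovectorSet (Vsub V J) := by
  refine ⟨⟨cvZero hV, fun g _ => rfl⟩, ?_, ?_, ?_⟩
  · rintro X ⟨hXV, hX0⟩
    exact ⟨cvNeg hV hXV, fun g hg => by rw [sv_neg_apply, hX0 g hg]; rfl⟩
  · rintro X ⟨hXV, hX0⟩ Y ⟨hYV, hY0⟩
    exact ⟨cvComp hV hXV hYV, fun g hg => by rw [comp_apply_zero (hX0 g hg)]; exact hY0 g hg⟩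
  · rintro X ⟨hXV, hX0⟩ Y ⟨hYV, hY0⟩ e hXe hYe
    obtain ⟨Z, hZV, hZe, hZ⟩ := hV.2.2.2 X hXV Y hYV e hXe hYe
    refine ⟨Z, ⟨hZV, fun g hg => ?_⟩, hZe, hZ⟩
    have hnc : ¬(X g = -(Y g) ∧ X g ≠ 0) := by
      rintro ⟨-, h2⟩
      exact h2 (hX0 g hg)
    rw [hZ g hnc, comp_apply_zero (hX0 g hg)]
    exact hY0 g hg

lemma vsub_weak [Fintype E] {V₁ V₂ : Set (SignVec E)} (h₁ : IsCovectorSet V₁) (h₂ : IsCovectorSet V₂)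
    (hw : weakSets V₁ V₂) {J : Finset E} (hJ : SetIndep V₂ J) :
    weakSets (Vsub V₁ J) (Vsub V₂ J) := by
  classical
  rintro Z ⟨hZV, hZ0⟩
  set T : Finset E := Finset.univ.filter (fun t => Z t ≠ 0) with hT
  have hdisj : Disjoint J T := by
    rw [Finset.disjoint_left]
    intro g hgJ hgT
    rw [hT, Finset.mem_filter] at hgT
    exact hgT.2 (hZ0 g hgJ)
  have hyp : ∀ s : SignVec E, (∀ g ∈ J, s g ≠ 0) →
      ∃ P ∈ V₁, (∀ g ∈ J, P g = s g) ∧ (∀ t ∈ T, P t = Z t) := by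
    intro s hs
    obtain ⟨G, hGV, hG⟩ := fullIndep_of_setIndep h₂ hJ s hs
    have hM : Z.comp G ∈ V₂ := cvComp h₂ hZV hGV
    obtain ⟨P, hPV, hle⟩ := hw _ hM
    refine ⟨P, hPV, fun g hg => ?_, fun t ht => ?_⟩
    · have hMg : Z.comp G g = s g := by
        rw [comp_apply_zero (hZ0 g hg)]; exact hG g hg
      rw [← le_apply hle (by rw [hMg]; exact hs g hg), hMg]
    · rw [hT, Finset.mem_filter] at ht
      have hMt : Z.comp G t = Z t := comp_apply_pos ht.2
      rw [← le_apply hle (by rw [hMt]; exact ht.2), hMt]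
  obtain ⟨Y, hYV, hYJ, hYT⟩ := star h₁ J T Z hdisj hyp
  refine ⟨Y, ⟨hYV, hYJ⟩, fun e => ?_⟩
  by_cases h : Z e = 0
  · exact Or.inl h
  · exact Or.inr (hYT e (by rw [hT, Finset.mem_filter]; exact ⟨Finset.mem_univ e, h⟩)).symm

lemma vsub_rank [Fintype E] (hV : IsCovectorSet V) {J : Finset E} (hJ : SetIndep V J) :
    setRank (Vsub V J) + J.card = setRank V := by
  obtain ⟨B, hJB, hBindep, hBcard, hBspan⟩ := exists_basis hV hJ
  -- lower bound: B \ J is independent in the contraction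
  have hBJindep : SetIndep (Vsub V J) (B \ J) := by
    intro b hb
    have hbB : b ∈ B := (Finset.mem_sdiff.mp hb).1
    obtain ⟨D, hDV, hDb, hD0⟩ := hBindep b hbB
    have hbJ : b ∉ J := (Finset.mem_sdiff.mp hb).2
    refine ⟨D, ⟨hDV, fun g hg => hD0 g (hJB hg) (fun hc => hbJ (hc ▸ hg))⟩, hDb,
      fun f hf hfb => hD0 f (Finset.mem_sdiff.mp hf).1 hfb⟩
  have hlow : setRank V - J.card ≤ setRank (Vsub V J) := by
    have := card_le_rank hBJindep
    rw [Finset.card_sdiff_of_subset hJB, hBcard] at this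
    exact this
  -- upper bound
  have hup : ∀ K : Finset E, SetIndep (Vsub V J) K → K.card ≤ setRank V - J.card := by
    intro K hK
    have hKJ : Disjoint K J := by
      rw [Finset.disjoint_left]
      intro k hkK hkJ
      obtain ⟨D, ⟨hDV, hD0⟩, hDk, -⟩ := hK k hkK
      exact hDk (hD0 k hkJ)
    -- sweep: for g ∈ J and any K' ⊆ K there is a covector nonzero at g,
    -- vanishing on J \ {g} and on K'
    have sweep : ∀ g ∈ J, ∀ K' : Finset E, K' ⊆ K →
        ∃ U ∈ V, U g ≠ 0 ∧ (∀ g' ∈ J, g' ≠ g → U g' = 0) ∧ (∀ k ∈ K', U k = 0) := by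
      intro g hg
      intro K'
      induction K' using Finset.induction_on with
      | empty =>
        intro _
        obtain ⟨U, hUV, hUg, hU0⟩ := hJ g hg
        exact ⟨U, hUV, hUg, hU0, fun k hk => absurd hk (Finset.notMem_empty k)⟩
      | @insert k K' hkK' ih =>
        intro hsub
        obtain ⟨U, hUV, hUg, hU0, hUK⟩ := ih ((Finset.subset_insert k K').trans hsub)
        by_cases hUk : U k = 0
        · refine ⟨U, hUV, hUg, hU0, fun k' hk' => ?_⟩
          rcases Finset.mem_insert.mp hk' with rfl | h
          · exact hUk
          · exact hUK k' h
        · have hkK : k ∈ K := hsub (Finset.mem_insert_self k K')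
          obtain ⟨D, ⟨hDV, hD0⟩, hDk, hDK⟩ := hK k hkK
          obtain ⟨U', hU'V, hU'k, hU'⟩ := elimA hV hUV hDV k hUk hDk
          have hgk : D g = 0 := hD0 g hg
          refine ⟨U', hU'V, by rw [hU' g hgk]; exact hUg, fun g' hg' hgg' => ?_,
            fun k' hk' => ?_⟩
          · rw [hU' g' (hD0 g' hg')]; exact hU0 g' hg' hgg'
          · rcases Finset.mem_insert.mp hk' with rfl | h
            · exact hU'k
            · have : D k' = 0 := by
                apply hDK k' (hsub (Finset.mem_insert_of_mem h))
                intro hc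
                exact hkK' (hc ▸ h)
              rw [hU' k' this]; exact hUK k' h
    have hJK : SetIndep V (J ∪ K) := by
      intro e he
      rcases Finset.mem_union.mp he with heJ | heK
      · obtain ⟨U, hUV, hUg, hU0, hUK⟩ := sweep e heJ K (Finset.Subset.refl K)
        refine ⟨U, hUV, hUg, fun f hf hfe => ?_⟩
        rcases Finset.mem_union.mp hf with hfJ | hfK
        · exact hU0 f hfJ hfe
        · exact hUK f hfK
      · obtain ⟨D, ⟨hDV, hD0⟩, hDe, hDK⟩ := hK e heK
        refine ⟨D, hDV, hDe, fun f hf hfe => ?_⟩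
        rcases Finset.mem_union.mp hf with hfJ | hfK
        · exact hD0 f hfJ
        · exact hDK f hfK hfe
    have hcard := card_le_rank hJK
    rw [Finset.card_union_of_disjoint (Finset.disjoint_of_subset_right (Finset.Subset.refl _)
      hKJ.symm)] at hcard
    omega
  have hub : setRank (Vsub V J) ≤ setRank V - J.card := rank_le hup
  have hJcard : J.card ≤ setRank V := card_le_rank hJ
  omega

/-- Masking a sign vector to a set of coordinates. -/
noncomputable def mask (A : Finset E) (X : SignVec E) : SignVec E :=
  fun e => if e ∈ A then X e else 0

/-- Deletion (as sign vectors on the full ground set). -/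
def Vmask (V : Set (SignVec E)) (A : Finset E) : Set (SignVec E) :=
  (mask A) '' V

lemma mask_apply_mem {A : Finset E} {X : SignVec E} {e : E} (h : e ∈ A) : mask A X e = X e :=
  if_pos h

lemma mask_apply_notMem {A : Finset E} {X : SignVec E} {e : E} (h : e ∉ A) : mask A X e = 0 :=
  if_neg h

lemma mask_comp (A : Finset E) (X Y : SignVec E) :
    (mask A X).comp (mask A Y) = mask A (X.comp Y) := by
  funext e
  by_cases he : e ∈ A
  · by_cases hX : X e = 0
    · rw [comp_apply_zero (by rw [mask_apply_mem he]; exact hX), mask_apply_mem he,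
        mask_apply_mem he, comp_apply_zero hX]
    · rw [comp_apply_pos (by rw [mask_apply_mem he]; exact hX), mask_apply_mem he,
        mask_apply_mem he, comp_apply_pos hX]
  · rw [comp_apply_zero (mask_apply_notMem he), mask_apply_notMem he, mask_apply_notMem he]

lemma vmask_isCovectorSet (hV : IsCovectorSet V) (A : Finset E) :
    IsCovectorSet (Vmask V A) := by
  refine ⟨⟨0, cvZero hV, ?_⟩, ?_, ?_, ?_⟩
  · funext e
    by_cases he : e ∈ A
    · exact mask_apply_mem he
    · exact mask_apply_notMem he
  · rintro _ ⟨X, hXV, rfl⟩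
    refine ⟨-X, cvNeg hV hXV, ?_⟩
    funext e
    by_cases he : e ∈ A
    · rw [mask_apply_mem he, sv_neg_apply, sv_neg_apply, mask_apply_mem he]
    · rw [mask_apply_notMem he, sv_neg_apply, mask_apply_notMem he]; rfl
  · rintro _ ⟨X, hXV, rfl⟩ _ ⟨Y, hYV, rfl⟩
    exact ⟨X.comp Y, cvComp hV hXV hYV, (mask_comp A X Y).symm⟩
  · rintro _ ⟨X, hXV, rfl⟩ _ ⟨Y, hYV, rfl⟩ e hXe hYe
    have heA : e ∈ A := by
      by_contra he
      rw [mask_apply_notMem he] at hXe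
      exact absurd hXe.symm (by decide)
    rw [mask_apply_mem heA] at hXe hYe
    obtain ⟨Z, hZV, hZe, hZ⟩ := hV.2.2.2 X hXV Y hYV e hXe hYe
    refine ⟨mask A Z, ⟨Z, hZV, rfl⟩, by rw [mask_apply_mem heA]; exact hZe, ?_⟩
    intro f hf
    by_cases hfA : f ∈ A
    · rw [mask_apply_mem hfA, mask_comp, mask_apply_mem hfA]
      apply hZ f
      rw [mask_apply_mem hfA, mask_apply_mem hfA] at hf
      exact hf
    · rw [mask_apply_notMem hfA, mask_comp, mask_apply_notMem hfA]

lemma vmask_setIndep_down {A I : Finset E} (hI : SetIndep (Vmask V A) I) : SetIndep V I := by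
  have hIA : ∀ f ∈ I, f ∈ A := by
    intro f hf
    obtain ⟨_, ⟨D, hDV, rfl⟩, hDf, -⟩ := hI f hf
    by_contra h
    exact hDf (mask_apply_notMem h)
  intro e he
  obtain ⟨_, ⟨D, hDV, rfl⟩, hDe, hD0⟩ := hI e he
  rw [mask_apply_mem (hIA e he)] at hDe
  refine ⟨D, hDV, hDe, fun f hf hfe => ?_⟩
  have := hD0 f hf hfe
  rwa [mask_apply_mem (hIA f hf)] at this

lemma vmask_rank_le [Fintype E] (A : Finset E) : setRank (Vmask V A) ≤ setRank V :=
  rank_le (fun _ hI => card_le_rank (vmask_setIndep_down hI))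

/-- The support of a sign vector, as a finset. -/
noncomputable def suppF [Fintype E] (X : SignVec E) : Finset E :=
  Finset.univ.filter (fun e => X e ≠ 0)

lemma mem_suppF [Fintype E] {X : SignVec E} {e : E} : e ∈ suppF X ↔ X e ≠ 0 := by
  simp [suppF]

/-- The key lemma: across a rank-preserving weak map, every nonzero covector dominates
a nonzero covector of the image. -/
lemma key [Fintype E] :
    ∀ N (V₁ V₂ : Set (SignVec E)), IsCovectorSet V₁ → IsCovectorSet V₂ →
      weakSets V₁ V₂ → setRank V₁ = setRank V₂ →
      ∀ X ∈ V₁, X ≠ 0 →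
      setRank V₁ * (Fintype.card E + 1) + (suppF X).card ≤ N →
      ∃ Z ∈ V₂, Z ≠ 0 ∧ SignVec.le Z X := by
  classical
  intro N
  induction N using Nat.strong_induction_on with
  | _ N ih =>
  intro V₁ V₂ h₁ h₂ hw hr X hXV hX0 hN
  obtain ⟨e₀, he₀⟩ : ∃ e, X e ≠ 0 := by
    by_contra hc
    push_neg at hc
    exact hX0 (funext fun e => hc e)
  have hr1 : 1 ≤ setRank V₁ := by
    have := card_le_rank (setIndep_singleton hXV he₀)
    simpa using this
  set H : Finset E := Finset.univ.filter (fun e => X e = 0) with hH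
  set F : Finset (Finset E) := H.powerset.filter (fun I => SetIndep V₂ I) with hF
  have hF0 : (∅ : Finset E) ∈ F := by
    simp only [hF, Finset.mem_filter, Finset.mem_powerset]
    exact ⟨Finset.empty_subset H, setIndep_empty⟩
  obtain ⟨J, hJF, hJmax⟩ := F.exists_max_image Finset.card ⟨∅, hF0⟩
  have hJH : J ⊆ H := by
    have := hJF; simp only [hF, Finset.mem_filter, Finset.mem_powerset] at this; exact this.1
  have hJ₂ : SetIndep V₂ J := by
    have := hJF; simp only [hF, Finset.mem_filter, Finset.mem_powerset] at this; exact this.2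
  have hXH : ∀ g ∈ H, X g = 0 := by
    intro g hg; rw [hH, Finset.mem_filter] at hg; exact hg.2
  rcases J.eq_empty_or_nonempty with rfl | hJne
  · -- tope route: no nonloop of V₂ inside the zero set of X
    have hH2 : ∀ Z ∈ V₂, ∀ h, X h = 0 → Z h = 0 := by
      intro Z hZ h hXh
      by_contra hZh
      have hhH : h ∈ H := by rw [hH, Finset.mem_filter]; exact ⟨Finset.mem_univ h, hXh⟩
      have hmem : ({h} : Finset E) ∈ F := by
        simp only [hF, Finset.mem_filter, Finset.mem_powerset]
        exact ⟨Finset.singleton_subset_iff.mpr hhH, setIndep_singleton hZ hZh⟩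
      have := hJmax _ hmem
      simp at this
    set A : Finset E := suppF X with hA
    set W₁ : Set (SignVec E) := Vmask V₁ A with hW
    have hW₁ : IsCovectorSet W₁ := vmask_isCovectorSet h₁ A
    have hXW : X ∈ W₁ := by
      refine ⟨X, hXV, funext fun e => ?_⟩
      by_cases he : e ∈ A
      · exact mask_apply_mem he
      · rw [mask_apply_notMem he]
        rw [hA, mem_suppF] at he
        simp only [ne_eq, not_not] at he
        exact he.symm
    have hW₁0 : ∀ Y ∈ W₁, ∀ e, X e = 0 → Y e = 0 := by
      rintro _ ⟨P, -, rfl⟩ e he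
      apply mask_apply_notMem
      rw [hA, mem_suppF]
      simp [he]
    have hwW : weakSets W₁ V₂ := by
      intro Z hZ
      obtain ⟨Y, hYV, hle⟩ := hw Z hZ
      refine ⟨mask A Y, ⟨Y, hYV, rfl⟩, fun e => ?_⟩
      by_cases hZe : Z e = 0
      · exact Or.inl hZe
      · have heA : e ∈ A := by
          rw [hA, mem_suppF]
          intro hXe
          exact hZe (hH2 Z hZ e hXe)
        rw [mask_apply_mem heA]
        exact Or.inr (le_apply hle hZe)
    have hrW : setRank W₁ = setRank V₁ := by
      have h1 : setRank W₁ ≤ setRank V₁ := vmask_rank_le A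
      have h2 : setRank V₂ ≤ setRank W₁ := rank_transfer hW₁ h₂ hwW
      omega
    obtain ⟨B, -, hB₂, hBcard, -⟩ := exists_basis h₂ (setIndep_empty (V := V₂))
    have hBA : ∀ b ∈ B, X b ≠ 0 := by
      intro b hb hXb
      obtain ⟨Db, hDbV, hDbb, -⟩ := hB₂ b hb
      exact hDbb (hH2 Db hDbV b hXb)
    have hBne : B.Nonempty := by
      rw [← Finset.card_pos, hBcard]
      omega
    obtain ⟨D, hDV₂, hD⟩ := fullIndep_of_setIndep h₂ hB₂ X hBA
    obtain ⟨b₀, hb₀⟩ := hBne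
    have hD0 : D ≠ 0 := by
      intro hc
      have := hD b₀ hb₀
      rw [hc] at this
      exact hBA b₀ hb₀ this.symm
    obtain ⟨Y₀, hY₀W, hleD⟩ := hwW D hDV₂
    set bad : SignVec E → Finset E :=
      fun Y => Finset.univ.filter (fun h => X h ≠ 0 ∧ Y h = -(X h)) with hbad
    have hmembad : ∀ Y g, g ∈ bad Y ↔ (X g ≠ 0 ∧ Y g = -(X g)) := by
      intro Y g; simp [hbad]
    have hY₀B : ∀ b ∈ B, Y₀ b = X b := by
      intro b hb
      rw [← le_apply hleD (by rw [hD b hb]; exact hBA b hb), hD b hb]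
    have inner : ∀ n (Y : SignVec E), Y ∈ W₁ → (∀ b ∈ B, Y b = X b) →
        (bad Y).Nonempty → (bad Y).card ≤ n →
        ∃ Y', Y' ∈ W₁ ∧ Y' ≠ 0 ∧ SignVec.le Y' X ∧ ∃ f', X f' ≠ 0 ∧ Y' f' = 0 := by
      intro n
      induction n with
      | zero =>
        intro Y _ _ hne hcard
        have := Finset.card_pos.mpr hne
        omega
      | succ n ihn =>
        intro Y hYW hYB hne hcard
        obtain ⟨f', hf'⟩ := hne
        rw [hmembad] at hf'
        obtain ⟨hXf', hYf'⟩ := hf'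
        obtain ⟨Y', hY'W, hY'f', hY'⟩ := elimGen hW₁ hXW hYW f' hXf' hYf'
        have hgood : ∀ g, g ∉ bad Y → Y' g = X.comp Y g := by
          intro g hg
          apply hY' g
          rintro ⟨hc1, hc2⟩
          apply hg
          rw [hmembad]
          exact ⟨hc2, by rw [hc1, neg_neg]⟩
        have hY'B : ∀ b ∈ B, Y' b = X b := by
          intro b hb
          have hbnb : b ∉ bad Y := by
            rw [hmembad]
            rintro ⟨h1, h2⟩
            rw [hYB b hb] at h2
            exact st_neg_ne_self _ h1 h2
          rw [hgood b hbnb, comp_apply_pos (hBA b hb)]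
        have hbadsub : bad Y' ⊆ (bad Y).erase f' := by
          intro g hg
          rw [hmembad] at hg
          rw [Finset.mem_erase]
          constructor
          · intro hc
            subst hc
            rw [hY'f'] at hg
            exact absurd (st_zero_eq_neg _ hg.2) hg.1
          · by_contra hgb
            have := hgood g hgb
            rw [comp_apply_pos hg.1] at this
            rw [this] at hg
            exact st_neg_ne_self _ hg.1 hg.2
        by_cases hB' : (bad Y').Nonempty
        · apply ihn Y' hY'W hY'B hB'
          have h1 := Finset.card_le_card hbadsub
          have h2 : f' ∈ bad Y := by rw [hmembad]; exact ⟨hXf', hYf'⟩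
          rw [Finset.card_erase_of_mem h2] at h1
          omega
        · rw [Finset.not_nonempty_iff_eq_empty] at hB'
          refine ⟨Y', hY'W, ?_, ?_, f', hXf', hY'f'⟩
          · intro hc
            have := hY'B b₀ hb₀
            rw [hc] at this
            exact hBA b₀ hb₀ this.symm
          · intro e
            by_cases hXe : X e = 0
            · exact Or.inl (hW₁0 Y' hY'W e hXe)
            · have henb : e ∉ bad Y' := by rw [hB']; exact Finset.notMem_empty e
              rw [hmembad] at henb
              push_neg at henb
              exact st_resolve _ _ hXe (henb hXe)
    by_cases hbad0 : (bad Y₀).Nonempty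
    · obtain ⟨Y', hY'W, hY'0, hY'le, f', hXf', hY'f'⟩ :=
        inner (bad Y₀).card Y₀ hY₀W hY₀B hbad0 (Nat.le_refl _)
      have hsupp : suppF Y' ⊂ suppF X := by
        constructor
        · intro e he
          rw [mem_suppF] at he ⊢
          intro hXe
          rcases hY'le e with h | h
          · exact he h
          · exact he (h.trans hXe)
        · intro hc
          have := hc (mem_suppF.mpr hXf')
          rw [mem_suppF] at this
          exact this hY'f'
      have hM : setRank W₁ * (Fintype.card E + 1) + (suppF Y').card < N := by
        have h1 : (suppF Y').card < (suppF X).card := Finset.card_lt_card hsupp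
        have hAcard : A.card = (suppF X).card := by rw [hA]
        rw [hrW]
        omega
      obtain ⟨Z, hZV₂, hZ0, hZle⟩ := ih _ hM W₁ V₂ hW₁ h₂ hwW (hrW.trans hr) Y' hY'W hY'0
        (Nat.le_refl _)
      exact ⟨Z, hZV₂, hZ0, le_trans hZle hY'le⟩
    · refine ⟨D, hDV₂, hD0, fun e => ?_⟩
      by_cases hDe : D e = 0
      · exact Or.inl hDe
      · have hXe : X e ≠ 0 := fun hc => hDe (hH2 D hDV₂ e hc)
        have heD : D e = Y₀ e := le_apply hleD hDe
        have : e ∉ bad Y₀ := by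
          rw [Finset.not_nonempty_iff_eq_empty] at hbad0
          rw [hbad0]
          exact Finset.notMem_empty e
        rw [hmembad] at this
        push_neg at this
        have := this hXe
        rw [← heD] at this
        exact st_resolve _ _ hXe this
  · -- contraction route
    have hJ₁ : SetIndep V₁ J := setIndep_transfer h₁ h₂ hw hJ₂
    have c₁ := vsub_isCovectorSet h₁ J
    have c₂ := vsub_isCovectorSet h₂ J
    have hw' := vsub_weak h₁ h₂ hw hJ₂
    have e₁ := vsub_rank h₁ hJ₁
    have e₂ := vsub_rank h₂ hJ₂
    have hr' : setRank (Vsub V₁ J) = setRank (Vsub V₂ J) := by omega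
    have hXV' : X ∈ Vsub V₁ J := ⟨hXV, fun g hg => hXH g (hJH hg)⟩
    have hJ1 : 1 ≤ J.card := Finset.card_pos.mpr hJne
    have hM : setRank (Vsub V₁ J) * (Fintype.card E + 1) + (suppF X).card < N := by
      have hmul : (setRank (Vsub V₁ J) + 1) * (Fintype.card E + 1) ≤
          setRank V₁ * (Fintype.card E + 1) := by
        apply Nat.mul_le_mul_right
        omega
      have hexp : (setRank (Vsub V₁ J) + 1) * (Fintype.card E + 1) =
          setRank (Vsub V₁ J) * (Fintype.card E + 1) + (Fintype.card E + 1) := by ring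
      have hcard : (suppF X).card ≤ Fintype.card E := by
        rw [← Finset.card_univ]
        exact Finset.card_le_univ _
      omega
    obtain ⟨Z, hZV₂, hZ0, hZle⟩ := ih _ hM (Vsub V₁ J) (Vsub V₂ J) c₁ c₂ hw' hr' X hXV' hX0
      (Nat.le_refl _)
    exact ⟨Z, vsub_subset hZV₂, hZ0, hZle⟩

/-- The key lemma in usable form. -/
lemma key' [Fintype E] {V₁ V₂ : Set (SignVec E)} (h₁ : IsCovectorSet V₁)
    (h₂ : IsCovectorSet V₂) (hw : weakSets V₁ V₂) (hr : setRank V₁ = setRank V₂)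
    {X : SignVec E} (hXV : X ∈ V₁) (hX0 : X ≠ 0) :
    ∃ Z ∈ V₂, Z ≠ 0 ∧ SignVec.le Z X :=
  key _ V₁ V₂ h₁ h₂ hw hr X hXV hX0 (Nat.le_refl _)

/-- The greatest covector of `V` dominated by `X`. -/
lemma exists_greatest_below [Fintype E] (hV : IsCovectorSet V) (X : SignVec E) :
    ∃ W ∈ V, SignVec.le W X ∧ ∀ Z ∈ V, SignVec.le Z X → SignVec.le Z W := by
  classical
  set T : Finset (SignVec E) := Finset.univ.filter (fun Z => Z ∈ V ∧ SignVec.le Z X) with hT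
  have hmem : ∀ Z, Z ∈ T ↔ (Z ∈ V ∧ SignVec.le Z X) := by
    intro Z; simp [hT]
  have hTne : T.Nonempty := ⟨0, (hmem 0).mpr ⟨cvZero hV, le_zero_left X⟩⟩
  obtain ⟨W, hWT, hWmax⟩ := T.exists_max_image (fun Z => (suppF Z).card) hTne
  rw [hmem] at hWT
  refine ⟨W, hWT.1, hWT.2, ?_⟩
  intro Z hZV hZle
  have hWZ : W.comp Z ∈ T := by
    rw [hmem]
    refine ⟨cvComp hV hWT.1 hZV, fun e => ?_⟩
    by_cases hW : W e = 0
    · rw [comp_apply_zero hW]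
      exact hZle e
    · rw [comp_apply_pos hW]
      exact hWT.2 e
  have hsub : suppF W ⊆ suppF (W.comp Z) := by
    intro e he
    rw [mem_suppF] at he ⊢
    rw [comp_apply_pos he]
    exact he
  have hsub2 : suppF Z ⊆ suppF (W.comp Z) := by
    intro e he
    rw [mem_suppF] at he ⊢
    by_cases hW : W e = 0
    · rw [comp_apply_zero hW]; exact he
    · rw [comp_apply_pos hW]; exact hW
  have heq : suppF W = suppF (W.comp Z) :=
    Finset.eq_of_subset_of_card_le hsub (hWmax _ hWZ)
  intro e
  by_cases hZe : Z e = 0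
  · exact Or.inl hZe
  · have hWe : W e ≠ 0 := by
      have : e ∈ suppF W := by
        rw [heq]
        exact hsub2 (mem_suppF.mpr hZe)
      rwa [mem_suppF] at this
    rw [le_apply hZle hZe, le_apply hWT.2 hWe]
    exact Or.inr rfl

end OMProof

/-- For a weak map from `M` to `M'` of equal-rank oriented matroids, the map `Φ` sending a
covector `X` of `M` to the composition of all nonzero covectors of `M'` below `X`
(characterized as the greatest covector of `M'` nonzero and dominated by `X`), and `0`
to `0`, is a well-defined order-preserving map into the covectors of `M'` satisfying
`X ≥ Φ X`, and it sends nonzero covectors to nonzero covectors. -/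
theorem weakMap_exists_phi {E : Type*} [Fintype E]
    (M M' : OrientedMatroid E) (h : WeakMap M M')
    (hrank : setRank M.covectors = setRank M'.covectors) :
    ∃ Φ : SignVec E → SignVec E,
      Φ 0 = 0 ∧
      (∀ X ∈ M.covectors, Φ X ∈ M'.covectors) ∧
      (∀ X ∈ M.covectors, SignVec.le (Φ X) X) ∧
      (∀ X ∈ M.covectors, ∀ Y ∈ M.covectors, SignVec.le X Y →
        SignVec.le (Φ X) (Φ Y)) ∧
      (∀ X ∈ M.covectors, X ≠ 0 → Φ X ≠ 0) ∧
      (∀ X ∈ M.covectors, ∀ X' ∈ M'.covectors, X' ≠ 0 → SignVec.le X' X →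
        SignVec.le X' (Φ X)) := by


  classical
  have hgr := fun X => OMProof.exists_greatest_below (V := M'.covectors) M'.isCovectorSet X
  choose Φ hΦmem hΦle hΦmax using hgr
  refine ⟨Φ, ?_, fun X _ => hΦmem X, fun X _ => hΦle X, ?_, ?_, ?_⟩
  · funext e
    rcases hΦle 0 e with h0 | h0
    · exact h0
    · exact h0
  · intro X _ Y _ hXY
    exact hΦmax Y (Φ X) (hΦmem X) (OMProof.le_trans (hΦle X) hXY)
  · intro X hXV hX0
    obtain ⟨Z, hZV, hZ0, hZle⟩ := OMProof.key' M.isCovectorSet M'.isCovectorSet h hrank hXV hX0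
    have hle := hΦmax X Z hZV hZle
    intro hc
    obtain ⟨e, he⟩ : ∃ e, Z e ≠ 0 := by
      by_contra hcc
      push_neg at hcc
      exact hZ0 (funext fun e => hcc e)
    have := OMProof.le_apply hle he
    rw [hc] at this
    exact he this
  · intro X _ X' hX'V _ hX'le
    exact hΦmax X X' hX'V hX'le
end

section
/- Let V be a finite-dimensional real vector space and φ₁,…,φₙ linear forms on V. Then the set of sign vectors {(sign φ₁(p),…,sign φₙ(p)) : p ∈ V} ∪ {0} satisfies the covector axioms of an oriented matroid: it contains 0, is closed under negation, closed under composition, and satisfies elimination. -/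
/-- The sign vectors realized by the linear forms `φ₁, …, φₙ` on `V`:
`p ↦ (sign φ₁(p), …, sign φₙ(p))`. -/
def realizedCov {V : Type*} [AddCommGroup V] [Module ℝ V] {n : ℕ}
    (φ : Fin n → (V →ₗ[ℝ] ℝ)) : Set (SignVec (Fin n)) :=
  {X | ∃ p : V, ∀ i, X i = SignType.sign (φ i p)}

open Filter Topology

/-- For a finite-dimensional real vector space `V` and linear forms `φ₁,…,φₙ` on `V`,
the set of sign vectors `{(sign φ₁(p),…,sign φₙ(p)) : p ∈ V}` satisfies the covector
axioms of an oriented matroid: it contains `0`, is closed under negation and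
composition, and satisfies elimination.  (The zero sign vector arises from `p = 0`.) -/
theorem realizedCov_isCovectorSet {V : Type*} [AddCommGroup V] [Module ℝ V]
    [FiniteDimensional ℝ V] {n : ℕ} (φ : Fin n → (V →ₗ[ℝ] ℝ)) :
    IsCovectorSet (realizedCov φ) := by
  refine ⟨⟨0, fun i => by simp⟩, ?_, ?_, ?_⟩
  · rintro X ⟨p, hp⟩
    exact ⟨-p, fun i => by simp [hp i, Left.sign_neg]⟩
  · rintro X ⟨p, hp⟩ Y ⟨q, hq⟩
    have key : ∀ i : Fin n, ∀ᶠ ε in 𝓝[>] (0:ℝ),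
        X.comp Y i = SignType.sign (φ i p + ε * φ i q) := by
      intro i
      have ht : Tendsto (fun ε : ℝ => φ i p + ε * φ i q) (𝓝[>] 0) (𝓝 (φ i p)) := by
        have hc : Continuous fun ε : ℝ => φ i p + ε * φ i q := by continuity
        simpa using (hc.tendsto 0).mono_left nhdsWithin_le_nhds
      rcases lt_trichotomy (φ i p) 0 with h | h | h
      · filter_upwards [ht (Iio_mem_nhds h)] with ε hε
        simp only [Set.mem_preimage, Set.mem_Iio] at hε
        have hX : X i = -1 := by rw [hp i]; exact sign_neg h
        simp [SignVec.comp, hX, sign_neg hε]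
      · filter_upwards [self_mem_nhdsWithin] with ε hε
        have hX : X i = 0 := by rw [hp i, h]; simp
        have hε' : (0:ℝ) < ε := hε
        simp [SignVec.comp, hX, h, hq i, sign_mul, sign_pos hε']
      · filter_upwards [ht (Ioi_mem_nhds h)] with ε hε
        simp only [Set.mem_preimage, Set.mem_Ioi] at hε
        have hX : X i = 1 := by rw [hp i]; exact sign_pos h
        simp [SignVec.comp, hX, sign_pos hε]
    obtain ⟨ε, hε⟩ := (eventually_all.2 key).exists
    refine ⟨p + ε • q, fun i => ?_⟩
    simpa [map_add, map_smul, smul_eq_mul] using hε i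
  · rintro X ⟨p, hp⟩ Y ⟨q, hq⟩ e hXe hYe
    have ha : 0 < φ e p := by
      have h := (hp e).symm.trans hXe
      exact sign_eq_one_iff.mp h
    have hb : 0 < -(φ e q) := by
      have h := (hq e).symm.trans hYe
      have := sign_eq_neg_one_iff.mp h
      linarith
    set z : V := (φ e p) • q + (-(φ e q)) • p with hz
    refine ⟨fun i => SignType.sign (φ i z), ⟨z, fun i => rfl⟩, ?_, ?_⟩
    · have : φ e z = 0 := by
        simp only [hz, map_add, map_smul, smul_eq_mul]; ring
      simp [this]
    · intro f hf
      have hzf : φ f z = (φ e p) * (φ f q) + (-(φ e q)) * (φ f p) := by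
        simp [hz, map_add, map_smul, smul_eq_mul]
      set a := φ e p
      set b := -(φ e q)
      set x := φ f p
      set y := φ f q
      rw [hp f, hq f] at hf
      simp only [SignVec.comp, hp f, hq f, hzf]
      rcases lt_trichotomy x 0 with h | h | h
      · have hx : SignType.sign x = -1 := sign_neg h
        have hy : y ≤ 0 := by
          by_contra hc
          push_neg at hc
          exact hf ⟨by rw [hx, sign_pos hc], by rw [hx]; decide⟩
        have : a * y + b * x < 0 := by nlinarith
        simp [hx, sign_neg this]
        have h' : φ f p < 0 := h
        rw [if_neg h'.ne, sign_neg h']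
      · have hx : SignType.sign x = 0 := by rw [h]; simp
        have : a * y + b * x = a * y := by rw [h]; ring
        rw [this, sign_mul, sign_pos ha]
        simp [hx]
        have h' : φ f p = 0 := h
        rw [if_pos h']
      · have hx : SignType.sign x = 1 := sign_pos h
        have hy : 0 ≤ y := by
          by_contra hc
          push_neg at hc
          exact hf ⟨by rw [hx, sign_neg hc]; decide, by rw [hx]; decide⟩
        have : 0 < a * y + b * x := by nlinarith
        simp [hx, sign_pos this]
        have h' : 0 < φ f p := h
        rw [if_neg h'.ne', sign_pos h']
end

section
/- Let μ : G → M be an upper semi-continuous function from a topological space to a poset, and let T : |K| → G be a triangulation refining the stratification induced by μ (the interior of each simplex maps to a single element of M). Then for every simplex α of the barycentric subdivision ΔK, the image μ(T(|α|)) is a totally ordered subset of M. -/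
/-- `K` is an (abstract) simplicial complex on the vertex set `V`: its members are
nonempty finite sets, closed under passing to nonempty subsets. -/
def IsSimplicialComplex {V : Type*} (K : Set (Finset V)) : Prop :=
  (∀ s ∈ K, s.Nonempty) ∧ ∀ s ∈ K, ∀ t : Finset V, t.Nonempty → t ⊆ s → t ∈ K

/-- The geometric realization of an abstract simplicial complex `K`: nonnegative weight
functions supported in some simplex of `K` with total weight `1` (topologized as a
subspace of the product `V → ℝ`). -/
def complexRealization {V : Type*} (K : Set (Finset V)) : Set (V → ℝ) :=
  {w | (∀ v, 0 ≤ w v) ∧ ∃ s ∈ K, (∀ v, v ∉ s → w v = 0) ∧ ∑ v ∈ s, w v = 1}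

/-- A map from a space to a poset is upper semi-continuous if every point has a
neighborhood on which the value does not decrease. -/
def UpperSemicontinuousToPoset {G M : Type*} [TopologicalSpace G] [Preorder M]
    (μ : G → M) : Prop :=
  ∀ g : G, ∃ U ∈ nhds g, ∀ u ∈ U, μ g ≤ μ u

/-- The barycenter of a simplex `s`. -/
noncomputable def barycenter {V : Type*} [DecidableEq V] (s : Finset V) : V → ℝ :=
  fun v => if v ∈ s then ((s.card : ℝ))⁻¹ else 0

/-- The (closed) simplex of the barycentric subdivision corresponding to a chain `c` of
simplices: convex combinations of the barycenters of the members of `c`. -/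
def barySimplex {V : Type*} [DecidableEq V] (c : Finset (Finset V)) : Set (V → ℝ) :=
  {w | ∃ t : Finset V → ℝ, (∀ s, 0 ≤ t s) ∧ (∑ s ∈ c, t s) = 1 ∧
    w = fun v => ∑ s ∈ c, t s * barycenter s v}

section Aux

variable {V : Type*} [DecidableEq V]

lemma bary_nonneg (s : Finset V) (v : V) : 0 ≤ barycenter s v := by
  unfold barycenter; split <;> positivity

lemma bary_not_mem {s : Finset V} {v : V} (h : v ∉ s) : barycenter s v = 0 := by
  simp [barycenter, h]

lemma bary_pos {s : Finset V} {v : V} (hs : s.Nonempty) (h : v ∈ s) :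
    0 < barycenter s v := by
  simp only [barycenter, h, if_true]
  have : (0 : ℝ) < s.card := by exact_mod_cast hs.card_pos
  positivity

lemma bary_sum_subset {s s' : Finset V} (hs : s.Nonempty) (hss : s ⊆ s') :
    ∑ v ∈ s', barycenter s v = 1 := by
  rw [← Finset.sum_subset hss (fun v _ hv => bary_not_mem hv)]
  have hcard : (s.card : ℝ) ≠ 0 := by exact_mod_cast hs.card_pos.ne'
  have h1 : ∑ v ∈ s, barycenter s v = ∑ _v ∈ s, ((s.card : ℝ))⁻¹ :=
    Finset.sum_congr rfl (fun v hv => by simp [barycenter, hv])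
  rw [h1, Finset.sum_const, nsmul_eq_mul, mul_inv_cancel₀ hcard]

lemma bary_support {s : Finset V} (hs : s.Nonempty) :
    {v | barycenter s v ≠ 0} = ↑s := by
  ext v
  by_cases h : v ∈ s
  · simp [h, (bary_pos hs h).ne']
  · simp [h, bary_not_mem h]

lemma bary_mem {K : Set (Finset V)} (hK : IsSimplicialComplex K) {s : Finset V}
    (hs : s ∈ K) : barycenter s ∈ complexRealization K :=
  ⟨bary_nonneg s, s, hs, fun _ hv => bary_not_mem hv,
    bary_sum_subset (hK.1 s hs) (subset_refl s)⟩

/-- A nonempty finite chain of finsets has a greatest element. -/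
lemma chain_finset_max {c : Finset (Finset V)}
    (hc : IsChain (· ⊆ ·) (↑c : Set (Finset V))) (hne : c.Nonempty) :
    ∃ sm ∈ c, ∀ s ∈ c, s ⊆ sm := by
  obtain ⟨sm, hsm, hmax⟩ : ∃ sm ∈ c, ∀ x ∈ c, ¬ sm < x :=
    let ⟨i, hi⟩ := Finset.exists_maximal hne
    ⟨i, hi.1, fun x hx hlt => lt_irrefl _ (lt_of_lt_of_le hlt (hi.2 hx hlt.le))⟩
  refine ⟨sm, hsm, fun s hs => ?_⟩
  by_cases h : s = sm
  · exact h ▸ subset_refl s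
  · rcases hc hs hsm h with h1 | h1
    · exact h1
    · exact absurd (Finset.ssubset_iff_subset_ne.mpr ⟨h1, Ne.symm h⟩) (hmax s hs)

/-- The support of a convex combination of barycenters of a chain is the largest
simplex with nonzero coefficient. -/
lemma combo_support {c : Finset (Finset V)}
    (hc : IsChain (· ⊆ ·) (↑c : Set (Finset V))) (hne : ∀ s ∈ c, s.Nonempty)
    {t : Finset V → ℝ} (ht0 : ∀ s, 0 ≤ t s) (ht1 : ∑ s ∈ c, t s = 1) :
    ∃ sm ∈ c, {v | (∑ s ∈ c, t s * barycenter s v) ≠ 0} = ↑sm := by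
  set d := c.filter (fun s => t s ≠ 0) with hd
  have hdne : d.Nonempty := by
    by_contra h
    rw [Finset.not_nonempty_iff_eq_empty, Finset.filter_eq_empty_iff] at h
    push_neg at h
    rw [Finset.sum_eq_zero h] at ht1
    exact zero_ne_one ht1
  have hdsub : d ⊆ c := Finset.filter_subset _ _
  obtain ⟨sm, hsmd, hmax⟩ :=
    chain_finset_max (hc.mono (by exact_mod_cast hdsub)) hdne
  have hsmc : sm ∈ c := hdsub hsmd
  have htsm : t sm ≠ 0 := (Finset.mem_filter.mp hsmd).2
  refine ⟨sm, hsmc, ?_⟩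
  ext v
  by_cases h : v ∈ sm
  · have hpos : 0 < ∑ s ∈ c, t s * barycenter s v := by
      apply Finset.sum_pos' (fun s _ => mul_nonneg (ht0 s) (bary_nonneg s v))
      exact ⟨sm, hsmc, mul_pos (lt_of_le_of_ne (ht0 sm) (Ne.symm htsm))
        (bary_pos (hne sm hsmc) h)⟩
    simp [h, hpos.ne']
  · have hz : ∑ s ∈ c, t s * barycenter s v = 0 := by
      apply Finset.sum_eq_zero
      intro s hs
      by_cases ht : t s = 0
      · simp [ht]
      · have : s ∈ d := Finset.mem_filter.mpr ⟨hs, ht⟩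
        have hvs : v ∉ s := fun hv => h (hmax s this hv)
        simp [bary_not_mem hvs]
    simp [h, hz]

end Aux

/-- Monotonicity along faces: the value of `μ ∘ T` at the barycenter of a face is
dominated by the value at the barycenter of the big simplex. -/
lemma usc_bary_mono {V G M : Type*} [DecidableEq V] [TopologicalSpace G]
    [Preorder M] (K : Set (Finset V)) (hK : IsSimplicialComplex K)
    (μ : G → M) (husc : UpperSemicontinuousToPoset μ)
    (T : (complexRealization K) ≃ₜ G)
    (hrefine : ∀ s ∈ K, ∀ w₁ w₂ : complexRealization K,
      {v | (w₁ : V → ℝ) v ≠ 0} = ↑s → {v | (w₂ : V → ℝ) v ≠ 0} = ↑s →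
        μ (T w₁) = μ (T w₂))
    {s s' : Finset V} (hs : s ∈ K) (hs' : s' ∈ K) (hss : s ⊆ s')
    (w w' : complexRealization K) (hw : (w : V → ℝ) = barycenter s)
    (hw' : (w' : V → ℝ) = barycenter s') : μ (T w) ≤ μ (T w') := by
  have hsne : s.Nonempty := hK.1 s hs
  have hs'ne : s'.Nonempty := hK.1 s' hs'
  set e : ℝ → ℝ := fun ε => min 1 (max 0 ε) with he
  have he0 : ∀ ε, 0 ≤ e ε := fun ε => le_min zero_le_one (le_max_left 0 ε)
  have he1 : ∀ ε, e ε ≤ 1 := fun ε => min_le_left 1 _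
  set q : ℝ → V → ℝ :=
    fun ε v => (1 - e ε) * barycenter s v + e ε * barycenter s' v with hq
  have hmem : ∀ ε, q ε ∈ complexRealization K := by
    intro ε
    refine ⟨fun v => add_nonneg (mul_nonneg (by linarith [he1 ε]) (bary_nonneg s v))
      (mul_nonneg (he0 ε) (bary_nonneg s' v)), s', hs', ?_, ?_⟩
    · intro v hv
      have hvs : v ∉ s := fun h => hv (hss h)
      simp [hq, bary_not_mem hv, bary_not_mem hvs]
    · simp only [hq, Finset.sum_add_distrib, ← Finset.mul_sum,
        bary_sum_subset hsne hss, bary_sum_subset hs'ne (subset_refl s')]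
      ring
  set P : ℝ → (complexRealization K : Set (V → ℝ)) := fun ε => ⟨q ε, hmem ε⟩ with hP
  have hP0 : P 0 = w := by
    apply Subtype.ext
    rw [hw]
    funext v
    simp [hP, hq, he]
  have hqcont : Continuous q := by
    apply continuous_pi
    intro v
    have hecont : Continuous e :=
      continuous_const.min (continuous_const.max continuous_id)
    exact ((continuous_const.sub hecont).mul continuous_const).add
      (hecont.mul continuous_const)
  have hcont : Continuous (fun ε => T (P ε)) :=
    T.continuous.comp (hqcont.subtype_mk hmem)
  obtain ⟨U, hU, hle⟩ := husc (T (P 0))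
  have hW : (fun ε => T (P ε)) ⁻¹' U ∈ nhds (0 : ℝ) :=
    hcont.continuousAt.preimage_mem_nhds hU
  obtain ⟨δ, hδ, hball⟩ := Metric.mem_nhds_iff.mp hW
  set ε : ℝ := min δ 1 / 2 with hε
  have hε0 : 0 < ε := by positivity
  have hε1 : ε < 1 := by
    have : min δ 1 ≤ 1 := min_le_right δ 1
    linarith
  have hεδ : ε < δ := by
    have : min δ 1 ≤ δ := min_le_left δ 1
    linarith
  have hεU : T (P ε) ∈ U := by
    apply hball
    simp [Real.dist_eq, abs_of_pos hε0, hεδ]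
  have h1 : μ (T w) ≤ μ (T (P ε)) := hP0 ▸ hle _ hεU
  have heε : e ε = ε := by
    rw [he]
    simp [max_eq_right hε0.le, min_eq_right hε1.le]
  have hsupp : {v | ((P ε : V → ℝ)) v ≠ 0} = ↑s' := by
    ext v
    by_cases h : v ∈ s'
    · have hpos : 0 < q ε v := by
        rw [hq]
        simp only [heε]
        exact add_pos_of_nonneg_of_pos
          (mul_nonneg (by linarith) (bary_nonneg s v))
          (mul_pos hε0 (bary_pos hs'ne h))
      simp [hP, h, hpos.ne']
    · have hvs : v ∉ s := fun hv => h (hss hv)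
      simp [hP, hq, h, bary_not_mem h, bary_not_mem hvs]
  have h2 : μ (T (P ε)) = μ (T w') :=
    hrefine s' hs' (P ε) w' hsupp (hw' ▸ bary_support hs'ne)
  exact h2 ▸ h1

/-- Let `μ : G → M` be an upper semi-continuous map from a space to a poset and let
`T : |K| → G` be a triangulation refining the stratification induced by `μ` (the
interior of each simplex maps to a single element of `M`).  Then for every simplex of
the barycentric subdivision `ΔK`, i.e. every nonempty chain `c` of simplices of `K`,
the image under `μ ∘ T` of the corresponding geometric simplex (spanned by the
barycenters of the members of `c`) is a totally ordered subset of `M`. -/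
theorem usc_triangulation_chain {V G M : Type*} [DecidableEq V] [TopologicalSpace G]
    [Preorder M] (K : Set (Finset V)) (hK : IsSimplicialComplex K)
    (μ : G → M) (husc : UpperSemicontinuousToPoset μ)
    (T : (complexRealization K) ≃ₜ G)
    (hrefine : ∀ s ∈ K, ∀ w₁ w₂ : complexRealization K,
      {v | (w₁ : V → ℝ) v ≠ 0} = ↑s → {v | (w₂ : V → ℝ) v ≠ 0} = ↑s →
        μ (T w₁) = μ (T w₂)) :
    ∀ c : Finset (Finset V), (↑c : Set (Finset V)) ⊆ K → c.Nonempty →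
      IsChain (· ⊆ ·) (↑c : Set (Finset V)) →
      IsChain (· ≤ ·)
        ((fun w => μ (T w)) ''
          {w : complexRealization K | (w : V → ℝ) ∈ barySimplex c}) := by
  intro c hcK hcne hchain
  have hne : ∀ s ∈ c, s.Nonempty := fun s hs => hK.1 s (hcK hs)
  -- every point of the barycentric simplex has μ∘T value equal to the value at
  -- the barycenter of some member of the chain
  have key : ∀ x ∈ (fun w : complexRealization K => μ (T w)) ''
      {w : complexRealization K | (w : V → ℝ) ∈ barySimplex c},
      ∃ sm, ∃ hsm : sm ∈ c,
        x = μ (T ⟨barycenter sm, bary_mem hK (hcK hsm)⟩) := by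
    rintro x ⟨w, hw, rfl⟩
    obtain ⟨t, ht0, ht1, hwt⟩ := hw
    obtain ⟨sm, hsmc, hsupp⟩ := combo_support hchain hne ht0 ht1
    refine ⟨sm, hsmc, ?_⟩
    exact hrefine sm (hcK hsmc) w _ (by rw [hwt]; exact hsupp)
      (bary_support (hne sm hsmc))
  intro x hx y hy hxy
  obtain ⟨s₁, hs₁, rfl⟩ := key x hx
  obtain ⟨s₂, hs₂, rfl⟩ := key y hy
  have hs₁₂ : s₁ ≠ s₂ := by
    intro h
    subst h
    exact hxy rfl
  rcases hchain hs₁ hs₂ hs₁₂ with h | h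
  · exact Or.inl (usc_bary_mono K hK μ husc T hrefine (hcK hs₁) (hcK hs₂) h
      _ _ rfl rfl)
  · exact Or.inr (usc_bary_mono K hK μ husc T hrefine (hcK hs₂) (hcK hs₁) h
      _ _ rfl rfl)
end
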